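/- arXiv:2005.01881 — 4 statements merged into one kernel-verified Lean document; each statement's English description precedes it below -/
import Mathlib

section
/- For complex m×n matrices A and B with q = min(m,n), the absolute value of Tr(A†B) is at most the sum over i from 1 to q of σ_i(A)·σ_i(B), where σ_i denotes the singular values arranged in non-increasing order (von Neumann's trace inequality). -/
open Matrix

/-- Sort a finite tuple of reals in non-increasing order. -/
noncomputable def descSort {n : ℕ} (f : Fin n → ℝ) : Fin n → ℝ :=
  fun i => f (Tuple.sort f i.rev)

/-- The singular values of a complex `m × n` matrix, arranged in non-increasing order. -/
noncomputable def singVal {m n : ℕ} (A : Matrix (Fin m) (Fin n) ℂ) : Fin n → ℝ :=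
  descSort fun i =>
    Real.sqrt (((Matrix.isHermitian_conjTranspose_mul_self A)).eigenvalues i)

open Finset


namespace VN

local notation "⟪" x ", " y "⟫" => @inner ℂ _ _ x y

variable {m n : ℕ}

noncomputable def lam (M : Matrix (Fin m) (Fin n) ℂ) : Fin n → ℝ :=
  (Matrix.isHermitian_conjTranspose_mul_self M).eigenvalues

noncomputable def sv (M : Matrix (Fin m) (Fin n) ℂ) : Fin n → ℝ :=
  fun i => Real.sqrt (lam M i)

noncomputable def v (M : Matrix (Fin m) (Fin n) ℂ) : Fin n → (Fin n → ℂ) :=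
  fun i => ⇑((Matrix.isHermitian_conjTranspose_mul_self M).eigenvectorBasis i)

noncomputable def vE (M : Matrix (Fin m) (Fin n) ℂ) : Fin n → EuclideanSpace ℂ (Fin n) :=
  fun i => (Matrix.isHermitian_conjTranspose_mul_self M).eigenvectorBasis i

noncomputable def c (M : Matrix (Fin m) (Fin n) ℂ) : Fin n → (Fin m → ℂ) :=
  fun i => M *ᵥ v M i

noncomputable def cE (M : Matrix (Fin m) (Fin n) ℂ) : Fin n → EuclideanSpace ℂ (Fin m) :=
  fun i => (WithLp.equiv 2 _).symm (c M i)

noncomputable def uE (M : Matrix (Fin m) (Fin n) ℂ) : Fin n → EuclideanSpace ℂ (Fin m) :=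
  fun i => ((sv M i : ℂ))⁻¹ • cE M i

lemma lam_nonneg (M : Matrix (Fin m) (Fin n) ℂ) (i : Fin n) : 0 ≤ lam M i :=
  Matrix.eigenvalues_conjTranspose_mul_self_nonneg M i

lemma sv_nonneg (M : Matrix (Fin m) (Fin n) ℂ) (i : Fin n) : 0 ≤ sv M i :=
  Real.sqrt_nonneg _

lemma sv_sq (M : Matrix (Fin m) (Fin n) ℂ) (i : Fin n) : sv M i ^ 2 = lam M i :=
  Real.sq_sqrt (lam_nonneg M i)

lemma singVal_eq (M : Matrix (Fin m) (Fin n) ℂ) : singVal M = descSort (sv M) := rfl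

lemma gram (M : Matrix (Fin m) (Fin n) ℂ) (i j : Fin n) :
    ⟪cE M i, cE M j⟫ = if i = j then (lam M i : ℂ) else 0 := by
  have h1 : ⟪cE M i, cE M j⟫ = star (c M i) ⬝ᵥ (c M j) :=
    by rw [EuclideanSpace.inner_eq_star_dotProduct, dotProduct_comm]; rfl
  rw [h1]
  have h2 : star (c M i) ⬝ᵥ (c M j)
      = star (v M i) ⬝ᵥ ((Mᴴ * M) *ᵥ v M j) := by
    unfold c
    rw [star_mulVec, dotProduct_mulVec, vecMul_vecMul, ← dotProduct_mulVec]
  have hmv : (Mᴴ * M) *ᵥ v M j = (lam M j) • v M j :=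
    (Matrix.isHermitian_conjTranspose_mul_self M).mulVec_eigenvectorBasis j
  rw [h2, hmv]
  have h3 : star (v M i) ⬝ᵥ ((lam M j) • v M j)
      = (lam M j : ℂ) * (star (v M i) ⬝ᵥ v M j) := by
    rw [dotProduct_smul]
    simp [Complex.real_smul]
  rw [h3]
  have h4 : star (v M i) ⬝ᵥ v M j = ⟪vE M i, vE M j⟫ :=
    by rw [EuclideanSpace.inner_eq_star_dotProduct, dotProduct_comm]; rfl
  have h5 := orthonormal_iff_ite.mp
    (Matrix.isHermitian_conjTranspose_mul_self M).eigenvectorBasis.orthonormal i j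
  rw [h4]
  unfold vE
  rw [h5]
  split_ifs with h
  · subst h; simp
  · simp

lemma norm_cE (M : Matrix (Fin m) (Fin n) ℂ) (i : Fin n) : ‖cE M i‖ = sv M i := by
  have := gram M i i
  rw [if_pos rfl] at this
  rw [@norm_eq_sqrt_re_inner ℂ, this]
  unfold sv
  norm_num

lemma cE_zero (M : Matrix (Fin m) (Fin n) ℂ) (i : Fin n) (h : sv M i = 0) : cE M i = 0 := by
  have := norm_cE M i
  rw [h] at this
  exact norm_eq_zero.mp this

lemma cE_eq_smul (M : Matrix (Fin m) (Fin n) ℂ) (i : Fin n) (h : sv M i ≠ 0) :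
    cE M i = (sv M i : ℂ) • uE M i := by
  unfold uE
  rw [smul_smul, mul_inv_cancel₀ (by exact_mod_cast h), one_smul]

lemma inner_uE (M : Matrix (Fin m) (Fin n) ℂ) (i j : Fin n) :
    ⟪uE M i, uE M j⟫ = ((sv M i : ℂ))⁻¹ * ((sv M j : ℂ))⁻¹ *
      (if i = j then (lam M i : ℂ) else 0) := by
  unfold uE
  rw [inner_smul_left, inner_smul_right, gram]
  rw [map_inv₀, Complex.conj_ofReal]
  ring

lemma orthonormal_uE (M : Matrix (Fin m) (Fin n) ℂ) :
    Orthonormal ℂ (fun i : {i : Fin n // sv M i ≠ 0} => uE M i.val) := by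
  rw [orthonormal_iff_ite]
  intro i j
  rw [inner_uE]
  by_cases h : i = j
  · subst h
    rw [if_pos rfl, if_pos rfl]
    have hsv := sv_sq M i.val
    have : (lam M i.val : ℂ) = (sv M i.val : ℂ) * (sv M i.val : ℂ) := by
      rw [← Complex.ofReal_mul]
      norm_cast
      rw [← hsv]; ring
    have hne : (sv M i.val : ℂ) ≠ 0 := by exact_mod_cast i.prop
    rw [this]
    field_simp
  · have : (i : Fin n) ≠ (j : Fin n) := fun hc => h (Subtype.ext hc)
    rw [if_neg this, if_neg h]
    ring

lemma norm_uE_le (M : Matrix (Fin m) (Fin n) ℂ) (i : Fin n) : ‖uE M i‖ ≤ 1 := by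
  unfold uE
  rw [norm_smul, norm_cE]
  by_cases h : sv M i = 0
  · simp [h]
  · have h0 : 0 < sv M i := lt_of_le_of_ne (sv_nonneg M i) (Ne.symm h)
    rw [norm_inv]
    rw [Complex.norm_real]
    rw [Real.norm_of_nonneg (sv_nonneg M i)]
    rw [inv_mul_cancel₀ h]

lemma card_sv_ne (M : Matrix (Fin m) (Fin n) ℂ) :
    (Finset.univ.filter fun i => sv M i ≠ 0).card ≤ m := by
  classical
  have h1 := (orthonormal_uE M).linearIndependent
  have h2 := h1.fintype_card_le_finrank
  rw [finrank_euclideanSpace_fin] at h2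
  simpa [Fintype.card_subtype] using h2

lemma besselONB (M : Matrix (Fin m) (Fin n) ℂ) (x : EuclideanSpace ℂ (Fin n))
    (hx : ‖x‖ ≤ 1) : ∑ i, ‖⟪vE M i, x⟫‖ ^ 2 ≤ 1 := by
  calc ∑ i, ‖⟪vE M i, x⟫‖ ^ 2 ≤ ‖x‖ ^ 2 :=
        (Matrix.isHermitian_conjTranspose_mul_self M).eigenvectorBasis.orthonormal.sum_inner_products_le x
    _ ≤ 1 := pow_le_one₀ (norm_nonneg x) hx

lemma besselU (M : Matrix (Fin m) (Fin n) ℂ) (x : EuclideanSpace ℂ (Fin m))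
    (hx : ‖x‖ ≤ 1) : ∑ k, ‖⟪uE M k, x⟫‖ ^ 2 ≤ 1 := by
  classical
  have hzero : ∀ k, sv M k = 0 → ‖⟪uE M k, x⟫‖ ^ 2 = 0 := by
    intro k hk
    have : uE M k = 0 := by
      unfold uE
      rw [hk]
      simp
    rw [this, inner_zero_left]
    simp
  have h1 : ∑ k, ‖⟪uE M k, x⟫‖ ^ 2
      = ∑ k ∈ Finset.univ.filter (fun k => sv M k ≠ 0), ‖⟪uE M k, x⟫‖ ^ 2 := by
    symm
    apply Finset.sum_filter_of_ne
    intro k _ hk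
    by_contra hc
    exact hk (hzero k hc)
  rw [h1]
  have h2 : ∑ k ∈ Finset.univ.filter (fun k => sv M k ≠ 0), ‖⟪uE M k, x⟫‖ ^ 2
      = ∑ k : {k : Fin n // sv M k ≠ 0}, ‖⟪uE M k.val, x⟫‖ ^ 2 := by
    rw [← Finset.sum_subtype (Finset.univ.filter (fun k => sv M k ≠ 0))
        (by intro k; simp) (fun k => ‖⟪uE M k, x⟫‖ ^ 2)]
  rw [h2]
  calc ∑ k : {k : Fin n // sv M k ≠ 0}, ‖⟪uE M k.val, x⟫‖ ^ 2 ≤ ‖x‖ ^ 2 :=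
        (orthonormal_uE M).sum_inner_products_le x
    _ ≤ 1 := pow_le_one₀ (norm_nonneg x) hx

lemma trace_eq_sum (U : Matrix (Fin n) (Fin n) ℂ) (hU : U * Uᴴ = 1)
    (M : Matrix (Fin n) (Fin n) ℂ) :
    M.trace = ∑ i, star (fun j => U j i) ⬝ᵥ (M *ᵥ fun j => U j i) := by
  have h1 : (Uᴴ * (M * U)).trace = M.trace := by
    rw [← mul_assoc, Matrix.trace_mul_cycle, hU, one_mul]
  rw [← h1]
  unfold Matrix.trace
  refine Finset.sum_congr rfl fun i _ => ?_
  simp only [Matrix.diag_apply, Matrix.mul_apply, Matrix.conjTranspose_apply, dotProduct,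
    Matrix.mulVec, Pi.star_apply]

lemma mulVec_decomp (M : Matrix (Fin m) (Fin n) ℂ) (x : Fin n → ℂ) :
    M *ᵥ x = fun p => ∑ k, (star (v M k) ⬝ᵥ x) * c M k p := by
  set W : Matrix (Fin n) (Fin n) ℂ :=
    ((Matrix.isHermitian_conjTranspose_mul_self M).eigenvectorUnitary : Matrix (Fin n) (Fin n) ℂ)
    with hW
  have hWU : W * Wᴴ = 1 := by
    rw [← Matrix.star_eq_conjTranspose]
    exact Unitary.coe_mul_star_self _
  have hx : W *ᵥ (Wᴴ *ᵥ x) = x := by rw [Matrix.mulVec_mulVec, hWU, Matrix.one_mulVec]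
  conv_lhs => rw [← hx, Matrix.mulVec_mulVec]
  funext p
  have lhs : ((M * W) *ᵥ (Wᴴ *ᵥ x)) p = ∑ k, (M * W) p k * (Wᴴ *ᵥ x) k := rfl
  rw [lhs]
  refine Finset.sum_congr rfl fun k _ => ?_
  have h1 : (M * W) p k = c M k p := rfl
  have h2 : (Wᴴ *ᵥ x) k = star (v M k) ⬝ᵥ x := rfl
  rw [h1, h2]
  ring

lemma trace_formula (A B : Matrix (Fin m) (Fin n) ℂ) :
    (Aᴴ * B).trace = ∑ i, ∑ k, (star (v B k) ⬝ᵥ v A i) * (star (c A i) ⬝ᵥ c B k) := by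
  set U : Matrix (Fin n) (Fin n) ℂ :=
    ((Matrix.isHermitian_conjTranspose_mul_self A).eigenvectorUnitary : Matrix (Fin n) (Fin n) ℂ)
    with hUdef
  have hU : U * Uᴴ = 1 := by
    rw [← Matrix.star_eq_conjTranspose]
    exact Unitary.coe_mul_star_self _
  have h0 : (Aᴴ * B).trace = ∑ i, star (v A i) ⬝ᵥ ((Aᴴ * B) *ᵥ v A i) :=
    trace_eq_sum U hU (Aᴴ * B)
  rw [h0]
  refine Finset.sum_congr rfl fun i _ => ?_
  have h1 : (Aᴴ * B) *ᵥ v A i = Aᴴ *ᵥ (B *ᵥ v A i) := (Matrix.mulVec_mulVec _ _ _).symm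
  rw [h1]
  have h2 : star (v A i) ⬝ᵥ (Aᴴ *ᵥ (B *ᵥ v A i)) = star (c A i) ⬝ᵥ (B *ᵥ v A i) := by
    rw [dotProduct_mulVec, ← star_mulVec]
    rfl
  rw [h2, mulVec_decomp B (v A i)]
  have h3 : star (c A i) ⬝ᵥ (fun p => ∑ k, (star (v B k) ⬝ᵥ v A i) * c B k p)
      = ∑ p, ∑ k, star (c A i) p * ((star (v B k) ⬝ᵥ v A i) * c B k p) := by
    refine Finset.sum_congr rfl fun p _ => ?_
    rw [Finset.mul_sum]
  rw [h3, Finset.sum_comm]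
  refine Finset.sum_congr rfl fun k _ => ?_
  have h4 : star (c A i) ⬝ᵥ c B k = ∑ p, star (c A i) p * c B k p := rfl
  rw [h4, Finset.mul_sum]
  refine Finset.sum_congr rfl fun p _ => ?_
  ring

end VN



lemma telescope_Ico (a : ℕ → ℝ) (i n : ℕ) (h : i ≤ n) :
    ∑ k ∈ Finset.Ico i n, (a k - a (k+1)) = a i - a n := by
  induction n with
  | zero => simp [Nat.le_zero.mp h]
  | succ n ih =>
    rcases Nat.lt_or_ge i (n+1) with h' | h'
    · have hi : i ≤ n := Nat.lt_succ_iff.mp h'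
      rw [Finset.sum_Ico_succ_top hi, ih hi]; ring
    · have : i = n + 1 := le_antisymm h h'
      subst this; simp

lemma indicator_repr (a : ℕ → ℝ) (n i : ℕ) (hi : i < n) (han : a n = 0) :
    a i = ∑ p ∈ range n, (if i ≤ p then (a p - a (p+1)) else 0) := by
  rw [Finset.sum_ite, Finset.sum_const_zero, add_zero]
  have : (range n).filter (fun p => i ≤ p) = Finset.Ico i n := by
    ext p; simp [Finset.mem_Ico, Finset.mem_filter, and_comm]
  rw [this, telescope_Ico a i n hi.le, han, sub_zero]

lemma count_le (n p : ℕ) (hp : p < n) :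
    ∑ i ∈ range n, (if i ≤ p then (1:ℝ) else 0) = p + 1 := by
  rw [Finset.sum_ite, Finset.sum_const_zero, add_zero, Finset.sum_const]
  have : (range n).filter (fun i => i ≤ p) = range (p+1) := by
    ext i; simp [Nat.lt_succ_iff]; omega
  rw [this]; simp

lemma key_nat (n : ℕ) (a b : ℕ → ℝ) (ha : Antitone a) (hb : Antitone b)
    (han : a n = 0) (hbn : b n = 0)
    (S : ℕ → ℕ → ℝ) (hS0 : ∀ i k, 0 ≤ S i k)
    (hrow : ∀ i, ∑ k ∈ range n, S i k ≤ 1)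
    (hcol : ∀ k, ∑ i ∈ range n, S i k ≤ 1) :
    ∑ i ∈ range n, ∑ k ∈ range n, a i * b k * S i k ≤ ∑ i ∈ range n, a i * b i := by
  set da : ℕ → ℝ := fun p => a p - a (p+1) with hda
  set db : ℕ → ℝ := fun q => b q - b (q+1) with hdb
  have hda0 : ∀ p, 0 ≤ da p := fun p => sub_nonneg.mpr (ha (Nat.le_succ p))
  have hdb0 : ∀ q, 0 ≤ db q := fun q => sub_nonneg.mpr (hb (Nat.le_succ q))
  set χ : ℕ → ℕ → ℝ := fun i p => if i ≤ p then (1:ℝ) else 0 with hχ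
  have hχ0 : ∀ i p, 0 ≤ χ i p := by intro i p; simp only [hχ]; split <;> norm_num
  have hχ1 : ∀ i p, χ i p ≤ 1 := by intro i p; simp only [hχ]; split <;> norm_num
  -- LHS rewriting
  have lhs_eq : ∑ i ∈ range n, ∑ k ∈ range n, a i * b k * S i k
      = ∑ p ∈ range n, ∑ q ∈ range n, da p * db q *
          (∑ i ∈ range n, ∑ k ∈ range n, χ i p * χ k q * S i k) := by
    have point : ∀ i ∈ range n, ∀ k ∈ range n, a i * b k * S i k
        = ∑ p ∈ range n, ∑ q ∈ range n,
            da p * db q * (χ i p * χ k q * S i k) := by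
      intro i hi k hk
      rw [indicator_repr a n i (mem_range.mp hi) han,
          indicator_repr b n k (mem_range.mp hk) hbn, Finset.sum_mul_sum, Finset.sum_mul]
      refine Finset.sum_congr rfl fun p _ => ?_
      rw [Finset.sum_mul]
      refine Finset.sum_congr rfl fun q _ => ?_
      simp only [hχ, hda, hdb]
      split_ifs <;> ring
    calc ∑ i ∈ range n, ∑ k ∈ range n, a i * b k * S i k
        = ∑ i ∈ range n, ∑ k ∈ range n, ∑ p ∈ range n, ∑ q ∈ range n,
            da p * db q * (χ i p * χ k q * S i k) := by
          exact Finset.sum_congr rfl fun i hi => Finset.sum_congr rfl fun k hk => point i hi k hk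
      _ = ∑ i ∈ range n, ∑ p ∈ range n, ∑ k ∈ range n, ∑ q ∈ range n,
            da p * db q * (χ i p * χ k q * S i k) := by
          exact Finset.sum_congr rfl fun i _ => Finset.sum_comm
      _ = ∑ p ∈ range n, ∑ i ∈ range n, ∑ k ∈ range n, ∑ q ∈ range n,
            da p * db q * (χ i p * χ k q * S i k) := Finset.sum_comm
      _ = ∑ p ∈ range n, ∑ i ∈ range n, ∑ q ∈ range n, ∑ k ∈ range n,
            da p * db q * (χ i p * χ k q * S i k) := by
          exact Finset.sum_congr rfl fun p _ => Finset.sum_congr rfl fun i _ => Finset.sum_comm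
      _ = ∑ p ∈ range n, ∑ q ∈ range n, ∑ i ∈ range n, ∑ k ∈ range n,
            da p * db q * (χ i p * χ k q * S i k) := by
          exact Finset.sum_congr rfl fun p _ => Finset.sum_comm
      _ = ∑ p ∈ range n, ∑ q ∈ range n, da p * db q *
            (∑ i ∈ range n, ∑ k ∈ range n, χ i p * χ k q * S i k) := by
          refine Finset.sum_congr rfl fun p _ => Finset.sum_congr rfl fun q _ => ?_
          rw [Finset.mul_sum]
          refine Finset.sum_congr rfl fun i _ => ?_
          rw [Finset.mul_sum]
  -- RHS rewriting
  have rhs_eq : ∑ i ∈ range n, a i * b i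
      = ∑ p ∈ range n, ∑ q ∈ range n, da p * db q *
          (∑ i ∈ range n, χ i p * χ i q) := by
    have point : ∀ i ∈ range n, a i * b i
        = ∑ p ∈ range n, ∑ q ∈ range n, da p * db q * (χ i p * χ i q) := by
      intro i hi
      rw [indicator_repr a n i (mem_range.mp hi) han,
          indicator_repr b n i (mem_range.mp hi) hbn, Finset.sum_mul_sum]
      refine Finset.sum_congr rfl fun p _ => Finset.sum_congr rfl fun q _ => ?_
      simp only [hχ, hda, hdb]
      split_ifs <;> ring
    calc ∑ i ∈ range n, a i * b i
        = ∑ i ∈ range n, ∑ p ∈ range n, ∑ q ∈ range n,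
            da p * db q * (χ i p * χ i q) := Finset.sum_congr rfl point
      _ = ∑ p ∈ range n, ∑ i ∈ range n, ∑ q ∈ range n,
            da p * db q * (χ i p * χ i q) := Finset.sum_comm
      _ = ∑ p ∈ range n, ∑ q ∈ range n, ∑ i ∈ range n,
            da p * db q * (χ i p * χ i q) := by
          exact Finset.sum_congr rfl fun p _ => Finset.sum_comm
      _ = ∑ p ∈ range n, ∑ q ∈ range n, da p * db q *
            (∑ i ∈ range n, χ i p * χ i q) := by
          refine Finset.sum_congr rfl fun p _ => Finset.sum_congr rfl fun q _ => ?_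
          rw [Finset.mul_sum]
  rw [lhs_eq, rhs_eq]
  refine Finset.sum_le_sum fun p hp => Finset.sum_le_sum fun q hq => ?_
  refine mul_le_mul_of_nonneg_left ?_ (mul_nonneg (hda0 p) (hdb0 q))
  -- T p q ≤ N p q
  have hN : ∑ i ∈ range n, χ i p * χ i q = (min p q : ℝ) + 1 := by
    have : ∀ i, χ i p * χ i q = if i ≤ min p q then (1:ℝ) else 0 := by
      intro i; simp only [hχ, le_min_iff]; split_ifs <;> simp_all <;> tauto
    rw [Finset.sum_congr rfl fun i _ => this i]
    have hmin : min p q < n := lt_of_le_of_lt (min_le_left p q) (mem_range.mp hp)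
    exact_mod_cast count_le n (min p q) hmin
  rw [hN]
  -- bound T by p+1 and q+1
  have hT1 : ∑ i ∈ range n, ∑ k ∈ range n, χ i p * χ k q * S i k ≤ (p:ℝ) + 1 := by
    calc ∑ i ∈ range n, ∑ k ∈ range n, χ i p * χ k q * S i k
        ≤ ∑ i ∈ range n, χ i p := by
          refine Finset.sum_le_sum fun i _ => ?_
          calc ∑ k ∈ range n, χ i p * χ k q * S i k
              ≤ ∑ k ∈ range n, χ i p * S i k := by
                refine Finset.sum_le_sum fun k _ => ?_
                rw [mul_assoc, mul_comm (χ k q), ← mul_assoc]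
                exact mul_le_of_le_one_right (mul_nonneg (hχ0 i p) (hS0 i k)) (hχ1 k q)
            _ = χ i p * ∑ k ∈ range n, S i k := by rw [Finset.mul_sum]
            _ ≤ χ i p * 1 := mul_le_mul_of_nonneg_left (hrow i) (hχ0 i p)
            _ = χ i p := mul_one _
      _ ≤ ∑ i ∈ range n, (if i ≤ p then (1:ℝ) else 0) := le_of_eq rfl
      _ = (p:ℝ) + 1 := count_le n p (mem_range.mp hp)
  have hT2 : ∑ i ∈ range n, ∑ k ∈ range n, χ i p * χ k q * S i k ≤ (q:ℝ) + 1 := by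
    rw [Finset.sum_comm]
    calc ∑ k ∈ range n, ∑ i ∈ range n, χ i p * χ k q * S i k
        ≤ ∑ k ∈ range n, χ k q := by
          refine Finset.sum_le_sum fun k _ => ?_
          calc ∑ i ∈ range n, χ i p * χ k q * S i k
              ≤ ∑ i ∈ range n, χ k q * S i k := by
                refine Finset.sum_le_sum fun i _ => ?_
                rw [mul_assoc]
                exact mul_le_of_le_one_left (mul_nonneg (hχ0 k q) (hS0 i k)) (hχ1 i p)
            _ = χ k q * ∑ i ∈ range n, S i k := by rw [Finset.mul_sum]
            _ ≤ χ k q * 1 := mul_le_mul_of_nonneg_left (hcol k) (hχ0 k q)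
            _ = χ k q := mul_one _
      _ = (q:ℝ) + 1 := count_le n q (mem_range.mp hq)
  rcases le_total p q with h | h
  · have : (p:ℝ) ⊓ (q:ℝ) = (p:ℝ) := min_eq_left (by exact_mod_cast h)
    rw [this]; exact hT1
  · have : (p:ℝ) ⊓ (q:ℝ) = (q:ℝ) := min_eq_right (by exact_mod_cast h)
    rw [this]; exact hT2

lemma descSort_antitone {n : ℕ} (f : Fin n → ℝ) : Antitone (descSort f) := by
  intro i j hij
  exact Tuple.monotone_sort f (Fin.rev_le_rev.mpr hij)

lemma descSort_eq_comp {n : ℕ} (f : Fin n → ℝ) :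
    descSort f = f ∘ (Fin.revPerm.trans (Tuple.sort f)) := rfl

lemma key_fin {n : ℕ} (a b : Fin n → ℝ) (ha0 : ∀ i, 0 ≤ a i) (hb0 : ∀ i, 0 ≤ b i)
    (S : Fin n → Fin n → ℝ) (hS0 : ∀ i k, 0 ≤ S i k)
    (hrow : ∀ i, ∑ k, S i k ≤ 1) (hcol : ∀ k, ∑ i, S i k ≤ 1) :
    ∑ i, ∑ k, a i * b k * S i k ≤ ∑ i, descSort a i * descSort b i := by
  classical
  set π : Equiv.Perm (Fin n) := Fin.revPerm.trans (Tuple.sort a) with hπ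
  set ρ : Equiv.Perm (Fin n) := Fin.revPerm.trans (Tuple.sort b) with hρ
  have hπa : ∀ i, descSort a i = a (π i) := fun i => rfl
  have hρb : ∀ k, descSort b k = b (ρ k) := fun k => rfl
  -- ℕ-extensions
  set A : ℕ → ℝ := fun j => if h : j < n then descSort a ⟨j, h⟩ else 0 with hA
  set B : ℕ → ℝ := fun j => if h : j < n then descSort b ⟨j, h⟩ else 0 with hB
  set T : ℕ → ℕ → ℝ := fun i k =>
    if h : i < n ∧ k < n then S (π ⟨i, h.1⟩) (ρ ⟨k, h.2⟩) else 0 with hT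
  have hAanti : Antitone A := by
    intro i j hij
    simp only [hA]
    split_ifs with h1 h2 h2
    · exact descSort_antitone a (by exact_mod_cast hij)
    · omega
    · exact ha0 _
    · exact le_refl 0
  have hBanti : Antitone B := by
    intro i j hij
    simp only [hB]
    split_ifs with h1 h2 h2
    · exact descSort_antitone b (by exact_mod_cast hij)
    · omega
    · exact hb0 _
    · exact le_refl 0
  have hAn : A n = 0 := by simp [hA]
  have hBn : B n = 0 := by simp [hB]
  have hT0 : ∀ i k, 0 ≤ T i k := by
    intro i k
    simp only [hT]
    split
    · exact hS0 _ _
    · exact le_refl 0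
  have hTrow : ∀ i, ∑ k ∈ range n, T i k ≤ 1 := by
    intro i
    by_cases hi : i < n
    · have : ∑ k ∈ range n, T i k = ∑ k : Fin n, S (π ⟨i, hi⟩) k := by
        rw [← Equiv.sum_comp ρ (fun k => S (π ⟨i, hi⟩) k)]
        rw [← Fin.sum_univ_eq_sum_range (fun k => T i k) n]
        refine Finset.sum_congr rfl fun k _ => ?_
        simp only [hT, hi, k.is_lt, and_self, dif_pos, Fin.eta]
      rw [this]; exact hrow _
    · have : ∑ k ∈ range n, T i k = 0 := by
        refine Finset.sum_eq_zero fun k _ => ?_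
        simp only [hT]
        rw [dif_neg (by omega)]
      rw [this]; norm_num
  have hTcol : ∀ k, ∑ i ∈ range n, T i k ≤ 1 := by
    intro k
    by_cases hk : k < n
    · have : ∑ i ∈ range n, T i k = ∑ i : Fin n, S i (ρ ⟨k, hk⟩) := by
        rw [← Equiv.sum_comp π (fun i => S i (ρ ⟨k, hk⟩))]
        rw [← Fin.sum_univ_eq_sum_range (fun i => T i k) n]
        refine Finset.sum_congr rfl fun i _ => ?_
        simp only [hT, hk, i.is_lt, and_self, dif_pos, Fin.eta]
      rw [this]; exact hcol _
    · have : ∑ i ∈ range n, T i k = 0 := by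
        refine Finset.sum_eq_zero fun i _ => ?_
        simp only [hT]
        rw [dif_neg (by omega)]
      rw [this]; norm_num
  have key := key_nat n A B hAanti hBanti hAn hBn T hT0 hTrow hTcol
  -- identify both sides
  have lhs_eq : ∑ i, ∑ k, a i * b k * S i k
      = ∑ i ∈ range n, ∑ k ∈ range n, A i * B k * T i k := by
    rw [← Equiv.sum_comp π (fun i => ∑ k, a i * b k * S i k)]
    rw [← Fin.sum_univ_eq_sum_range (fun i => ∑ k ∈ range n, A i * B k * T i k) n]
    refine Finset.sum_congr rfl fun i _ => ?_
    rw [← Equiv.sum_comp ρ (fun k => a (π i) * b k * S (π i) k)]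
    rw [← Fin.sum_univ_eq_sum_range (fun k => A ↑i * B k * T ↑i k) n]
    refine Finset.sum_congr rfl fun k _ => ?_
    simp only [hA, hB, hT, i.is_lt, k.is_lt, and_self, dif_pos, Fin.eta]
    rfl
  have rhs_eq : ∑ i, descSort a i * descSort b i = ∑ i ∈ range n, A i * B i := by
    rw [← Fin.sum_univ_eq_sum_range (fun i => A i * B i) n]
    refine Finset.sum_congr rfl fun i _ => ?_
    simp only [hA, hB, i.is_lt, dif_pos, Fin.eta]
  rw [lhs_eq, rhs_eq]
  exact key

lemma descSort_zero_tail {N : ℕ} (f : Fin N → ℝ) (hf0 : ∀ i, 0 ≤ f i) (M : ℕ)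
    (hcard : (Finset.univ.filter fun i => f i ≠ 0).card ≤ M) (i : Fin N) (hi : M ≤ i.val) :
    descSort f i = 0 := by
  classical
  by_contra h
  have hanti := descSort_antitone f
  have hpos : ∀ j, j ≤ i → descSort f j ≠ 0 := by
    intro j hj h0
    have h1 : descSort f i ≤ descSort f j := hanti hj
    have h2 : (0:ℝ) ≤ descSort f i := hf0 _
    exact h (le_antisymm (h0 ▸ h1) h2)
  have hsub : Finset.Iic i ⊆ Finset.univ.filter (fun j => descSort f j ≠ 0) := by
    intro j hj
    simp only [Finset.mem_filter, Finset.mem_univ, true_and]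
    exact hpos j (Finset.mem_Iic.mp hj)
  have hcard2 : (Finset.univ.filter (fun j => descSort f j ≠ 0)).card
      = (Finset.univ.filter (fun j => f j ≠ 0)).card := by
    apply Finset.card_bij (fun j _ => (Fin.revPerm.trans (Tuple.sort f)) j)
    · intro j hj
      simp only [Finset.mem_filter, Finset.mem_univ, true_and] at hj ⊢
      exact hj
    · intro j1 _ j2 _ hkk
      exact (Equiv.injective _) hkk
    · intro x hx
      refine ⟨(Fin.revPerm.trans (Tuple.sort f)).symm x, ?_, ?_⟩
      · simp only [Finset.mem_filter, Finset.mem_univ, true_and] at hx ⊢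
        show f ((Fin.revPerm.trans (Tuple.sort f)) ((Fin.revPerm.trans (Tuple.sort f)).symm x)) ≠ 0
        rwa [Equiv.apply_symm_apply]
      · rw [Equiv.apply_symm_apply]
  have hle := Finset.card_le_card hsub
  rw [Fin.card_Iic, hcard2] at hle
  omega

/-- von Neumann's trace inequality. -/
theorem stmt0 {m n : ℕ} (A B : Matrix (Fin m) (Fin n) ℂ) :
    ‖(Aᴴ * B).trace‖ ≤
      ∑ i : Fin (min m n),
        singVal A (Fin.castLE (min_le_right m n) i) *
        singVal B (Fin.castLE (min_le_right m n) i) := by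
  classical
  set a : Fin n → ℝ := VN.sv A with ha_def
  set b : Fin n → ℝ := VN.sv B with hb_def
  set S : Fin n → Fin n → ℝ := fun i k =>
    (‖(inner ℂ (VN.vE B k) (VN.vE A i) : ℂ)‖^2 + ‖(inner ℂ (VN.uE A i) (VN.uE B k) : ℂ)‖^2)/2
    with hS_def
  have hrr : ∀ i k, star (VN.c A i) ⬝ᵥ VN.c B k = (inner ℂ (VN.cE A i) (VN.cE B k) : ℂ) :=
    fun i k => by rw [EuclideanSpace.inner_eq_star_dotProduct, dotProduct_comm]; rfl
  have hqq : ∀ i k, star (VN.v B k) ⬝ᵥ VN.v A i = (inner ℂ (VN.vE B k) (VN.vE A i) : ℂ) :=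
    fun i k => by rw [EuclideanSpace.inner_eq_star_dotProduct, dotProduct_comm]; rfl
  have hS0 : ∀ i k, 0 ≤ S i k := by
    intro i k
    simp only [hS_def]
    positivity
  -- termwise bound
  have hterm : ∀ i k,
      ‖(star (VN.v B k) ⬝ᵥ VN.v A i) * (star (VN.c A i) ⬝ᵥ VN.c B k)‖ ≤ a i * b k * S i k := by
    intro i k
    rw [norm_mul, hrr, hqq]
    by_cases hai : a i = 0
    · have hc0 : VN.cE A i = 0 := VN.cE_zero A i hai
      rw [hc0, inner_zero_left, norm_zero, mul_zero, hai, zero_mul, zero_mul]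
    · by_cases hbk : b k = 0
      · have hc0 : VN.cE B k = 0 := VN.cE_zero B k hbk
        rw [hc0, inner_zero_right, norm_zero, mul_zero, hbk]
        simp [hS0 i k]
      · have hre : (inner ℂ (VN.cE A i) (VN.cE B k) : ℂ)
            = ((a i : ℝ) : ℂ) * ((b k : ℝ) : ℂ) * inner ℂ (VN.uE A i) (VN.uE B k) := by
          rw [VN.cE_eq_smul A i hai, VN.cE_eq_smul B k hbk, inner_smul_left,
            inner_smul_right, Complex.conj_ofReal]
          ring
        rw [hre]
        set x := ‖(inner ℂ (VN.vE B k) (VN.vE A i) : ℂ)‖ with hx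
        set y := ‖(inner ℂ (VN.uE A i) (VN.uE B k) : ℂ)‖ with hy
        have hxnn : 0 ≤ x := norm_nonneg _
        have hynn : 0 ≤ y := norm_nonneg _
        have hann : 0 ≤ a i := VN.sv_nonneg A i
        have hbnn : 0 ≤ b k := VN.sv_nonneg B k
        have hnorm : ‖((a i : ℝ) : ℂ) * ((b k : ℝ) : ℂ) * (inner ℂ (VN.uE A i) (VN.uE B k) : ℂ)‖
            = a i * b k * y := by
          rw [norm_mul, norm_mul, Complex.norm_real, Complex.norm_real,
            Real.norm_of_nonneg hann, Real.norm_of_nonneg hbnn]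
        rw [hnorm, hS_def]
        have h2 := two_mul_le_add_sq x y
        nlinarith [mul_nonneg hann hbnn]
  -- row and column sums
  have hSrow : ∀ i, ∑ k, S i k ≤ 1 := by
    intro i
    have e1 : ∑ k, ‖(inner ℂ (VN.vE B k) (VN.vE A i) : ℂ)‖^2 ≤ 1 := by
      apply VN.besselONB B (VN.vE A i)
      exact le_of_eq ((Matrix.isHermitian_conjTranspose_mul_self A).eigenvectorBasis.orthonormal.1 i)
    have e2 : ∑ k, ‖(inner ℂ (VN.uE A i) (VN.uE B k) : ℂ)‖^2 ≤ 1 := by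
      have hsym : ∀ k, ‖(inner ℂ (VN.uE A i) (VN.uE B k) : ℂ)‖
          = ‖(inner ℂ (VN.uE B k) (VN.uE A i) : ℂ)‖ := fun k => norm_inner_symm _ _
      calc ∑ k, ‖(inner ℂ (VN.uE A i) (VN.uE B k) : ℂ)‖^2
          = ∑ k, ‖(inner ℂ (VN.uE B k) (VN.uE A i) : ℂ)‖^2 := by
            exact Finset.sum_congr rfl fun k _ => by rw [hsym k]
        _ ≤ 1 := VN.besselU B (VN.uE A i) (VN.norm_uE_le A i)
    have : ∑ k, S i k = ((∑ k, ‖(inner ℂ (VN.vE B k) (VN.vE A i) : ℂ)‖^2)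
        + ∑ k, ‖(inner ℂ (VN.uE A i) (VN.uE B k) : ℂ)‖^2)/2 := by
      rw [← Finset.sum_add_distrib, ← Finset.sum_div]
    rw [this]
    linarith
  have hScol : ∀ k, ∑ i, S i k ≤ 1 := by
    intro k
    have e1 : ∑ i, ‖(inner ℂ (VN.vE B k) (VN.vE A i) : ℂ)‖^2 ≤ 1 := by
      have hsym : ∀ i, ‖(inner ℂ (VN.vE B k) (VN.vE A i) : ℂ)‖
          = ‖(inner ℂ (VN.vE A i) (VN.vE B k) : ℂ)‖ := fun i => norm_inner_symm _ _
      calc ∑ i, ‖(inner ℂ (VN.vE B k) (VN.vE A i) : ℂ)‖^2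
          = ∑ i, ‖(inner ℂ (VN.vE A i) (VN.vE B k) : ℂ)‖^2 := by
            exact Finset.sum_congr rfl fun i _ => by rw [hsym i]
        _ ≤ 1 := by
            apply VN.besselONB A (VN.vE B k)
            exact le_of_eq ((Matrix.isHermitian_conjTranspose_mul_self B).eigenvectorBasis.orthonormal.1 k)
    have e2 : ∑ i, ‖(inner ℂ (VN.uE A i) (VN.uE B k) : ℂ)‖^2 ≤ 1 :=
      VN.besselU A (VN.uE B k) (VN.norm_uE_le B k)
    have : ∑ i, S i k = ((∑ i, ‖(inner ℂ (VN.vE B k) (VN.vE A i) : ℂ)‖^2)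
        + ∑ i, ‖(inner ℂ (VN.uE A i) (VN.uE B k) : ℂ)‖^2)/2 := by
      rw [← Finset.sum_add_distrib, ← Finset.sum_div]
    rw [this]
    linarith
  -- the main chain
  have h1 : ‖(Aᴴ * B).trace‖ ≤ ∑ i, ∑ k, a i * b k * S i k := by
    rw [VN.trace_formula A B]
    calc ‖∑ i, ∑ k, (star (VN.v B k) ⬝ᵥ VN.v A i) * (star (VN.c A i) ⬝ᵥ VN.c B k)‖
        ≤ ∑ i, ‖∑ k, (star (VN.v B k) ⬝ᵥ VN.v A i) * (star (VN.c A i) ⬝ᵥ VN.c B k)‖ :=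
          norm_sum_le _ _
      _ ≤ ∑ i, ∑ k, ‖(star (VN.v B k) ⬝ᵥ VN.v A i) * (star (VN.c A i) ⬝ᵥ VN.c B k)‖ :=
          Finset.sum_le_sum fun i _ => norm_sum_le _ _
      _ ≤ ∑ i, ∑ k, a i * b k * S i k :=
          Finset.sum_le_sum fun i _ => Finset.sum_le_sum fun k _ => hterm i k
  have h2 : ∑ i, ∑ k, a i * b k * S i k ≤ ∑ i, descSort a i * descSort b i :=
    key_fin a b (VN.sv_nonneg A) (VN.sv_nonneg B) S hS0 hSrow hScol
  -- tail identification
  have hsingA : singVal A = descSort a := rfl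
  have hsingB : singVal B = descSort b := rfl
  set F : ℕ → ℝ := fun j =>
    if h : j < n then descSort a ⟨j, h⟩ * descSort b ⟨j, h⟩ else 0 with hF_def
  have h3 : ∑ i, descSort a i * descSort b i = ∑ j ∈ Finset.range n, F j := by
    rw [← Fin.sum_univ_eq_sum_range F n]
    refine Finset.sum_congr rfl fun i _ => ?_
    simp only [hF_def, i.is_lt, dif_pos, Fin.eta]
  have h4 : ∑ i : Fin (min m n),
      singVal A (Fin.castLE (min_le_right m n) i) * singVal B (Fin.castLE (min_le_right m n) i)
      = ∑ j ∈ Finset.range (min m n), F j := by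
    rw [← Fin.sum_univ_eq_sum_range F (min m n)]
    refine Finset.sum_congr rfl fun i _ => ?_
    have hilt : (i : ℕ) < n := lt_of_lt_of_le i.is_lt (min_le_right m n)
    simp only [hF_def, hilt, dif_pos, hsingA, hsingB]
    rfl
  have h5 : ∑ j ∈ Finset.range (min m n), F j = ∑ j ∈ Finset.range n, F j := by
    apply Finset.sum_subset
    · exact Finset.range_subset_range.mpr (min_le_right m n)
    · intro j hj hnj
      have hjn : j < n := Finset.mem_range.mp hj
      have hjge : min m n ≤ j := by
        by_contra hc
        exact hnj (Finset.mem_range.mpr (by omega))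
      have hmj : m ≤ j := by omega
      simp only [hF_def, hjn, dif_pos]
      have hzero : descSort a ⟨j, hjn⟩ = 0 :=
        descSort_zero_tail a (VN.sv_nonneg A) m (VN.card_sv_ne A) ⟨j, hjn⟩ hmj
      rw [hzero, zero_mul]
  rw [h4, h5, ← h3]
  linarith
end

section
/- Let ρ be a density operator on ℂᵐ ⊗ ℂⁿ, let Π_V be the orthogonal projection onto a subspace V of ℂᵐ ⊗ ℂⁿ, and let Λ = sup over unit vectors Ψ ∈ V of the square of the largest Schmidt coefficient of Ψ. Then for any ensemble decomposition ρ = Σ_μ q_μ |Φ_μ⟩⟨Φ_μ| with unit vectors Φ_μ having Schmidt coefficients √λ^{(μ)}_i, one has Tr(ρ Π_V) ≤ Λ·(1 + 2 Σ_μ q_μ Σ_{i<j} √(λ^{(μ)}_i λ^{(μ)}_j)). -/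
open Matrix

/-- Coefficient matrix of a vector in `ℂᵐ ⊗ ℂⁿ`. -/
def coefMat {m n : ℕ} (ψ : Fin m × Fin n → ℂ) : Matrix (Fin m) (Fin n) ℂ :=
  Matrix.of fun i j => ψ (i, j)

/-- Squared Schmidt coefficients of `ψ`, in non-increasing order. -/
noncomputable def schmidtSq {m n : ℕ} (ψ : Fin m × Fin n → ℂ) : Fin n → ℝ :=
  descSort fun i =>
    (Matrix.isHermitian_conjTranspose_mul_self (coefMat ψ)).eigenvalues i

/-- The square of the largest Schmidt coefficient of `ψ`. -/
noncomputable def topSchmidtSq {m n : ℕ} (ψ : Fin m × Fin n → ℂ) : ℝ :=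
  ⨆ i, schmidtSq ψ i

/-! ### Auxiliary lemmas -/

section Aux

private lemma sq_sum_eq' {n : ℕ} (a : Fin n → ℝ) :
    (∑ i, a i)^2 = ∑ i, (a i)^2 + 2 * ∑ i, ∑ j ∈ Finset.Ioi i, a i * a j := by
  have huniv : ∀ i : Fin n, (Finset.univ : Finset (Fin n))
      = (Finset.Iio i).disjUnion (Finset.Ici i) (by simp [Finset.disjoint_left]) := by
    intro i; ext j; simp; omega
  have swap : ∑ i, ∑ j ∈ Finset.Iio i, a i * a j = ∑ j, ∑ i ∈ Finset.Ioi j, a i * a j :=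
    Finset.sum_comm' (by intro x y; simp [Finset.mem_Iio, Finset.mem_Ioi, and_comm])
  calc (∑ i, a i)^2 = ∑ i, ∑ j, a i * a j := by rw [sq, Finset.sum_mul_sum]
    _ = ∑ i, (∑ j ∈ Finset.Iio i, a i * a j + ((a i)^2 + ∑ j ∈ Finset.Ioi i, a i * a j)) := by
        refine Finset.sum_congr rfl fun i _ => ?_
        rw [huniv i, Finset.sum_disjUnion, Finset.Ici_eq_cons_Ioi, Finset.sum_cons, sq]
    _ = _ := by
        rw [Finset.sum_add_distrib, Finset.sum_add_distrib, swap,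
          Finset.sum_congr rfl (fun j _ => Finset.sum_congr rfl fun i _ => mul_comm (a i) (a j))]
        ring

private lemma dot_self_re' {k : Type*} [Fintype k] (v : k → ℂ) :
    (star v ⬝ᵥ v).re = ∑ p, ‖v p‖ ^ 2 := by
  rw [dotProduct, Complex.re_sum]
  refine Finset.sum_congr rfl fun p _ => ?_
  simp [Pi.star_apply, ← Complex.normSq_eq_norm_sq, Complex.normSq_apply, Complex.mul_re]

private lemma dot_self_im' {k : Type*} [Fintype k] (v : k → ℂ) :
    (star v ⬝ᵥ v).im = 0 := by
  rw [dotProduct, Complex.im_sum]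
  refine Finset.sum_eq_zero fun p _ => ?_
  simp [Pi.star_apply, Complex.mul_im]
  ring

private lemma quadform_eq' {k : ℕ} {M : Matrix (Fin k) (Fin k) ℂ} (hM : M.IsHermitian)
    (v : Fin k → ℂ) :
    (star v ⬝ᵥ M *ᵥ v).re
      = ∑ i, hM.eigenvalues i
          * ‖(star (hM.eigenvectorUnitary : Matrix (Fin k) (Fin k) ℂ) *ᵥ v) i‖ ^ 2 := by
  classical
  set U : Matrix (Fin k) (Fin k) ℂ := (hM.eigenvectorUnitary : Matrix (Fin k) (Fin k) ℂ) with hU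
  set w : Fin k → ℂ := star U *ᵥ v with hw
  have hsw : star w = star v ᵥ* U := by
    rw [hw, Matrix.star_mulVec, ← Matrix.star_eq_conjTranspose, star_star]
  have h1 : star w ⬝ᵥ (Matrix.diagonal (RCLike.ofReal ∘ hM.eigenvalues)) *ᵥ w
      = star v ⬝ᵥ M *ᵥ v := by
    have hs : M = U * Matrix.diagonal (RCLike.ofReal ∘ hM.eigenvalues) * star U :=
      hM.spectral_theorem
    rw [hsw, ← Matrix.dotProduct_mulVec, hw, Matrix.mulVec_mulVec, Matrix.mulVec_mulVec,
      ← hs]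
  rw [← h1, dotProduct, Complex.re_sum]
  refine Finset.sum_congr rfl fun i _ => ?_
  rw [Matrix.mulVec_diagonal]
  simp [Pi.star_apply, ← Complex.normSq_eq_norm_sq, Complex.normSq_apply, Complex.mul_re,
    Function.comp]
  ring

private lemma norm_w_eq' {k : ℕ} {M : Matrix (Fin k) (Fin k) ℂ} (hM : M.IsHermitian)
    (v : Fin k → ℂ) :
    ∑ i, ‖(star (hM.eigenvectorUnitary : Matrix (Fin k) (Fin k) ℂ) *ᵥ v) i‖ ^ 2
      = ∑ p, ‖v p‖ ^ 2 := by
  classical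
  set U : Matrix (Fin k) (Fin k) ℂ := (hM.eigenvectorUnitary : Matrix (Fin k) (Fin k) ℂ) with hU
  set w : Fin k → ℂ := star U *ᵥ v with hw
  have hUU : U * star U = 1 := Matrix.mem_unitaryGroup_iff.mp hM.eigenvectorUnitary.2
  have hsw : star w = star v ᵥ* U := by
    rw [hw, Matrix.star_mulVec, ← Matrix.star_eq_conjTranspose, star_star]
  have h : star w ⬝ᵥ w = star v ⬝ᵥ v := by
    rw [hsw, ← Matrix.dotProduct_mulVec, hw, Matrix.mulVec_mulVec, hUU, Matrix.one_mulVec]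
  rw [← dot_self_re', ← dot_self_re', h]

private lemma quadform_le' {k : ℕ} {M : Matrix (Fin k) (Fin k) ℂ} (hM : M.IsHermitian)
    {c : ℝ} (hc : ∀ i, hM.eigenvalues i ≤ c) (v : Fin k → ℂ) :
    (star v ⬝ᵥ M *ᵥ v).re ≤ c * ∑ p, ‖v p‖ ^ 2 := by
  rw [quadform_eq' hM v, ← norm_w_eq' hM v, Finset.mul_sum]
  exact Finset.sum_le_sum fun i _ => by
    have := sq_nonneg (‖(star (hM.eigenvectorUnitary : Matrix (Fin k) (Fin k) ℂ) *ᵥ v) i‖)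
    nlinarith [hc i]

private lemma trace_eq_sum_eig' {k : ℕ} {M : Matrix (Fin k) (Fin k) ℂ} (hM : M.IsHermitian) :
    M.trace = ∑ i, (hM.eigenvalues i : ℂ) := by
  classical
  set U : Matrix (Fin k) (Fin k) ℂ := (hM.eigenvectorUnitary : Matrix (Fin k) (Fin k) ℂ)
  have hUU' : star U * U = 1 := Matrix.mem_unitaryGroup_iff'.mp hM.eigenvectorUnitary.2
  calc M.trace = (U * Matrix.diagonal (RCLike.ofReal ∘ hM.eigenvalues) * star U).trace := by
        exact congrArg Matrix.trace hM.spectral_theorem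
    _ = (star U * (U * Matrix.diagonal (RCLike.ofReal ∘ hM.eigenvalues))).trace := by
        rw [Matrix.trace_mul_comm]
    _ = (Matrix.diagonal (RCLike.ofReal ∘ hM.eigenvalues)).trace := by
        rw [← Matrix.mul_assoc, hUU', Matrix.one_mul]
    _ = ∑ i, (hM.eigenvalues i : ℂ) := by simp [Matrix.trace, Function.comp]

private lemma prod_dot' {m n : ℕ} (u : Fin m → ℂ) (v : Fin n → ℂ) (ψ : Fin m × Fin n → ℂ)
    (A : Matrix (Fin m) (Fin n) ℂ) (hA : ∀ p q, A p q = ψ (p, q)) :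
    star (fun p : Fin m × Fin n => u p.1 * star (v p.2)) ⬝ᵥ ψ = star u ⬝ᵥ (A *ᵥ v) := by
  simp only [dotProduct, Pi.star_apply, mulVec, dotProduct, Finset.mul_sum,
    Fintype.sum_prod_type, star_mul', star_star]
  refine Finset.sum_congr rfl fun p _ => Finset.sum_congr rfl fun q _ => ?_
  rw [hA p q]; ring

private lemma cs_sq' {k : Type*} [Fintype k] (u w : k → ℂ) :
    ‖star u ⬝ᵥ w‖ ^ 2
      ≤ (∑ p, ‖u p‖ ^ 2) * (∑ p, ‖w p‖ ^ 2) := by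
  have h := norm_inner_le_norm (𝕜 := ℂ) (E := EuclideanSpace ℂ k)
    ((EuclideanSpace.equiv k ℂ).symm u) ((EuclideanSpace.equiv k ℂ).symm w)
  rw [EuclideanSpace.inner_eq_star_dotProduct] at h
  have hu : ‖(EuclideanSpace.equiv k ℂ).symm u‖ ^ 2 = ∑ p, ‖u p‖ ^ 2 := by
    rw [EuclideanSpace.norm_eq, Real.sq_sqrt (by positivity)]
    simp
  have hw : ‖(EuclideanSpace.equiv k ℂ).symm w‖ ^ 2 = ∑ p, ‖w p‖ ^ 2 := by
    rw [EuclideanSpace.norm_eq, Real.sq_sqrt (by positivity)]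
    simp
  calc ‖star u ⬝ᵥ w‖ ^ 2
      ≤ (‖(EuclideanSpace.equiv k ℂ).symm u‖ * ‖(EuclideanSpace.equiv k ℂ).symm w‖)^2 := by
        have h2 : ‖star u ⬝ᵥ w‖
            ≤ ‖(EuclideanSpace.equiv k ℂ).symm u‖ * ‖(EuclideanSpace.equiv k ℂ).symm w‖ := by
          rw [dotProduct_comm]; exact h
        exact pow_le_pow_left₀ (norm_nonneg _) h2 2
    _ = _ := by rw [mul_pow, hu, hw]

private lemma AtA_dot' {l k : Type*} [Fintype l] [Fintype k] (A : Matrix l k ℂ) (v : k → ℂ) :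
    star (A *ᵥ v) ⬝ᵥ (A *ᵥ v) = star v ⬝ᵥ ((Aᴴ * A) *ᵥ v) := by
  rw [Matrix.star_mulVec, Matrix.dotProduct_mulVec, Matrix.vecMul_vecMul,
    Matrix.dotProduct_mulVec]

variable {m n : ℕ}

private lemma schmidt_eq_comp (ψ : Fin m × Fin n → ℂ) :
    ∃ e : Equiv.Perm (Fin n), ∀ i, schmidtSq ψ i
      = (Matrix.isHermitian_conjTranspose_mul_self (coefMat ψ)).eigenvalues (e i) := by
  refine ⟨(Fin.revPerm).trans (Tuple.sort fun i =>
    (Matrix.isHermitian_conjTranspose_mul_self (coefMat ψ)).eigenvalues i), fun i => rfl⟩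

private lemma schmidt_nonneg (ψ : Fin m × Fin n → ℂ) (i : Fin n) : 0 ≤ schmidtSq ψ i := by
  obtain ⟨e, he⟩ := schmidt_eq_comp ψ
  rw [he]
  exact Matrix.eigenvalues_conjTranspose_mul_self_nonneg _ _

private lemma sum_schmidt_comp (ψ : Fin m × Fin n → ℂ) (g : ℝ → ℝ) :
    ∑ i, g (schmidtSq ψ i)
      = ∑ i, g ((Matrix.isHermitian_conjTranspose_mul_self (coefMat ψ)).eigenvalues i) := by
  obtain ⟨e, he⟩ := schmidt_eq_comp ψ
  rw [Finset.sum_congr rfl fun i _ => by rw [he i]]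
  exact Equiv.sum_comp e fun j =>
    g ((Matrix.isHermitian_conjTranspose_mul_self (coefMat ψ)).eigenvalues j)

private lemma sum_schmidt (ψ : Fin m × Fin n → ℂ) :
    ∑ i, schmidtSq ψ i = ∑ p, ‖ψ p‖ ^ 2 := by
  have h := sum_schmidt_comp ψ id
  simp only [id] at h
  rw [h]
  have ht := trace_eq_sum_eig' (Matrix.isHermitian_conjTranspose_mul_self (coefMat ψ))
  have h2 : ((coefMat ψ)ᴴ * coefMat ψ).trace.re = ∑ i,
      (Matrix.isHermitian_conjTranspose_mul_self (coefMat ψ)).eigenvalues i := by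
    rw [ht, Complex.re_sum]; simp
  rw [← h2]
  simp only [Matrix.trace, Matrix.diag, Matrix.mul_apply, Matrix.conjTranspose_apply,
    Complex.re_sum]
  rw [Fintype.sum_prod_type]
  rw [Finset.sum_comm]
  refine Finset.sum_congr rfl fun j _ => ?_
  refine Finset.sum_congr rfl fun p _ => ?_
  simp [coefMat, ← Complex.normSq_eq_norm_sq, Complex.normSq_apply, Complex.mul_re]

private lemma eig_le_top (hn : 0 < n) (ψ : Fin m × Fin n → ℂ) (i : Fin n) :
    (Matrix.isHermitian_conjTranspose_mul_self (coefMat ψ)).eigenvalues i ≤ topSchmidtSq ψ := by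
  obtain ⟨e, he⟩ := schmidt_eq_comp ψ
  have : Nonempty (Fin n) := ⟨⟨0, hn⟩⟩
  have h := le_ciSup (Set.Finite.bddAbove (Set.finite_range (schmidtSq ψ))) (e.symm i)
  rwa [he (e.symm i), Equiv.apply_symm_apply] at h

private lemma top_nonneg (hn : 0 < n) (ψ : Fin m × Fin n → ℂ) : 0 ≤ topSchmidtSq ψ := by
  have : Nonempty (Fin n) := ⟨⟨0, hn⟩⟩
  exact le_trans (schmidt_nonneg ψ ⟨0, hn⟩)
    (le_ciSup (Set.Finite.bddAbove (Set.finite_range (schmidtSq ψ))) _)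

private lemma top_le_one (hn : 0 < n) (ψ : Fin m × Fin n → ℂ)
    (hψ : ∑ p, ‖ψ p‖ ^ 2 = 1) : topSchmidtSq ψ ≤ 1 := by
  have : Nonempty (Fin n) := ⟨⟨0, hn⟩⟩
  refine ciSup_le fun j => ?_
  calc schmidtSq ψ j ≤ ∑ i, schmidtSq ψ i :=
        Finset.single_le_sum (fun i _ => schmidt_nonneg ψ i) (Finset.mem_univ j)
    _ = 1 := by rw [sum_schmidt ψ, hψ]

private lemma schmidt_decomp (hm : 0 < m) (Φ : Fin m × Fin n → ℂ) :
    ∃ (u : Fin n → Fin m → ℂ) (v : Fin n → Fin n → ℂ),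
      (∀ i, ∑ p, ‖u i p‖ ^ 2 = 1) ∧
      (∀ i, ∑ q, ‖v i q‖ ^ 2 = 1) ∧
      (∀ p : Fin m × Fin n, Φ p = ∑ i,
        ((Real.sqrt ((Matrix.isHermitian_conjTranspose_mul_self (coefMat Φ)).eigenvalues i) : ℝ) : ℂ)
          * (u i p.1 * star (v i p.2))) := by
  classical
  set A := coefMat Φ with hA
  set hM := Matrix.isHermitian_conjTranspose_mul_self A
  set eig := hM.eigenvalues with heig
  have heig0 : ∀ i, 0 ≤ eig i := Matrix.eigenvalues_conjTranspose_mul_self_nonneg A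
  set v : Fin n → Fin n → ℂ := fun i => ⇑(hM.eigenvectorBasis i) with hv
  have hvnorm : ∀ i, ∑ q, ‖v i q‖ ^ 2 = 1 := by
    intro i
    have h1 : ‖hM.eigenvectorBasis i‖ = 1 := hM.eigenvectorBasis.orthonormal.1 i
    rw [EuclideanSpace.norm_eq] at h1
    have h2 : (∑ q, ‖hM.eigenvectorBasis i q‖ ^ 2) = 1 := by
      have := congrArg (· ^ 2) h1
      simp only [one_pow] at this
      rwa [Real.sq_sqrt (Finset.sum_nonneg fun q _ => sq_nonneg _)] at this
    exact h2
  have hMv : ∀ i, (Aᴴ * A) *ᵥ v i = eig i • v i := fun i => hM.mulVec_eigenvectorBasis i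
  have hAvnorm : ∀ i, ∑ p, ‖(A *ᵥ v i) p‖ ^ 2 = eig i := by
    intro i
    rw [← dot_self_re', AtA_dot', hMv i]
    have h4 : star (v i) ⬝ᵥ (eig i • v i) = (eig i : ℂ) * (star (v i) ⬝ᵥ v i) := by
      rw [RCLike.real_smul_eq_coe_smul (K := ℂ), dotProduct_smul, smul_eq_mul]
      rfl
    rw [h4, Complex.mul_re, Complex.ofReal_re, Complex.ofReal_im]
    rw [dot_self_re', dot_self_im', hvnorm i]
    ring
  set u : Fin n → Fin m → ℂ := fun i => if eig i = 0 then Pi.single (⟨0, hm⟩ : Fin m) 1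
    else ((Real.sqrt (eig i) : ℝ) : ℂ)⁻¹ • (A *ᵥ v i) with hu
  have hAv : ∀ i, A *ᵥ v i = ((Real.sqrt (eig i) : ℝ) : ℂ) • u i := by
    intro i
    by_cases h : eig i = 0
    · have hz : A *ᵥ v i = 0 := by
        funext p
        have hsum : ∑ p, ‖(A *ᵥ v i) p‖ ^ 2 = 0 := by rw [hAvnorm i, h]
        have h5 := (Finset.sum_eq_zero_iff_of_nonneg (fun p _ => by positivity)).mp hsum p
          (Finset.mem_univ p)
        have habs : ‖(A *ᵥ v i) p‖ = 0 := by
          nlinarith [norm_nonneg ((A *ᵥ v i) p)]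
        simpa using habs
      rw [hz, h]
      simp
    · have hs : ((Real.sqrt (eig i) : ℝ) : ℂ) ≠ 0 := by
        simp only [ne_eq, Complex.ofReal_eq_zero]
        exact Real.sqrt_ne_zero'.mpr (lt_of_le_of_ne (heig0 i) (Ne.symm h))
      rw [hu]
      simp only [h, if_false]
      rw [smul_smul, mul_inv_cancel₀ hs, one_smul]
  have hunorm : ∀ i, ∑ p, ‖u i p‖ ^ 2 = 1 := by
    intro i
    by_cases h : eig i = 0
    · simp only [hu, h, if_true, if_pos]
      rw [Finset.sum_eq_single (⟨0, hm⟩ : Fin m)]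
      · simp
      · intro b _ hb; simp [Pi.single_apply, hb]
      · intro hb; exact absurd (Finset.mem_univ _) hb
    · have hpos : 0 < eig i := lt_of_le_of_ne (heig0 i) (Ne.symm h)
      simp only [hu, h, if_false]
      have h6 : ∀ p, ‖(((Real.sqrt (eig i) : ℝ) : ℂ)⁻¹ • (A *ᵥ v i)) p‖ ^ 2
          = (Real.sqrt (eig i))⁻¹ ^ 2 * ‖(A *ᵥ v i) p‖ ^ 2 := by
        intro p
        simp [Pi.smul_apply, _root_.map_mul, mul_pow, abs_of_nonneg (Real.sqrt_nonneg _),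
          Complex.norm_real]
      rw [Finset.sum_congr rfl fun p _ => h6 p, ← Finset.mul_sum, hAvnorm i]
      rw [inv_pow, Real.sq_sqrt (heig0 i)]
      field_simp
  have hcomp : ∀ k q : Fin n, ∑ i, v i k * star (v i q) = if k = q then 1 else 0 := by
    intro k q
    have hUU : (hM.eigenvectorUnitary : Matrix (Fin n) (Fin n) ℂ)
        * star (hM.eigenvectorUnitary : Matrix (Fin n) (Fin n) ℂ) = 1 :=
      Matrix.mem_unitaryGroup_iff.mp hM.eigenvectorUnitary.2
    have h7 := congrFun (congrFun hUU k) q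
    rw [Matrix.mul_apply] at h7
    simp only [Matrix.one_apply] at h7
    rw [← h7]
    refine Finset.sum_congr rfl fun i _ => ?_
    rw [Matrix.star_apply, hM.eigenvectorUnitary_apply, hM.eigenvectorUnitary_apply]
  refine ⟨u, v, hunorm, hvnorm, fun p => ?_⟩
  obtain ⟨pa, pb⟩ := p
  have h8 : Φ (pa, pb) = A pa pb := rfl
  rw [h8]
  calc A pa pb = ∑ k, A pa k * (if k = pb then 1 else 0) := by
        simp
    _ = ∑ k, A pa k * ∑ i, v i k * star (v i pb) := by
        refine Finset.sum_congr rfl fun k _ => by rw [hcomp k pb]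
    _ = ∑ k, ∑ i, A pa k * v i k * star (v i pb) := by
        refine Finset.sum_congr rfl fun k _ => ?_
        rw [Finset.mul_sum]
        exact Finset.sum_congr rfl fun i _ => by ring
    _ = ∑ i, ∑ k, A pa k * v i k * star (v i pb) := Finset.sum_comm
    _ = ∑ i, star (v i pb) * ∑ k, A pa k * v i k := by
        refine Finset.sum_congr rfl fun i _ => ?_
        rw [Finset.mul_sum]
        exact Finset.sum_congr rfl fun k _ => by ring
    _ = ∑ i, ((Real.sqrt (eig i) : ℝ) : ℂ) * (u i pa * star (v i pb)) := by
        refine Finset.sum_congr rfl fun i _ => ?_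
        have h9 : (∑ k, A pa k * v i k) = (A *ᵥ v i) pa := rfl
        rw [h9, hAv i]
        simp [Pi.smul_apply, smul_eq_mul]
        ring

private lemma bddS (P : Matrix (Fin m × Fin n) (Fin m × Fin n) ℂ) :
    BddAbove {x : ℝ | ∃ ψ : Fin m × Fin n → ℂ, P *ᵥ ψ = ψ ∧
      (∑ p, ‖ψ p‖ ^ 2 = 1) ∧ x = topSchmidtSq ψ} := by
  refine ⟨1, ?_⟩
  rintro x ⟨ψ, -, h1, rfl⟩
  rcases Nat.eq_zero_or_pos n with hn | hn
  · subst hn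
    simp at h1
  exact top_le_one hn ψ h1

private lemma lam_nonneg (P : Matrix (Fin m × Fin n) (Fin m × Fin n) ℂ) (Λ : ℝ)
    (hΛ : Λ = sSup {x : ℝ | ∃ ψ : Fin m × Fin n → ℂ, P *ᵥ ψ = ψ ∧
      (∑ p, ‖ψ p‖ ^ 2 = 1) ∧ x = topSchmidtSq ψ}) : 0 ≤ Λ := by
  rcases Set.eq_empty_or_nonempty {x : ℝ | ∃ ψ : Fin m × Fin n → ℂ, P *ᵥ ψ = ψ ∧
      (∑ p, ‖ψ p‖ ^ 2 = 1) ∧ x = topSchmidtSq ψ} with he | ⟨x, hx⟩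
  · rw [hΛ, he, Real.sSup_empty]
  · obtain ⟨ψ, hP', h1, rfl⟩ := hx
    rcases Nat.eq_zero_or_pos n with hn | hn
    · subst hn
      simp at h1
    exact le_trans (top_nonneg hn ψ) (hΛ ▸ le_csSup (bddS P) ⟨ψ, hP', h1, rfl⟩)

private lemma overlap (hn : 0 < n)
    (P : Matrix (Fin m × Fin n) (Fin m × Fin n) ℂ) (Λ : ℝ)
    (hΛ : Λ = sSup {x : ℝ | ∃ ψ : Fin m × Fin n → ℂ, P *ᵥ ψ = ψ ∧
      (∑ p, ‖ψ p‖ ^ 2 = 1) ∧ x = topSchmidtSq ψ})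
    (u : Fin m → ℂ) (hu : ∑ p, ‖u p‖ ^ 2 = 1)
    (v : Fin n → ℂ) (hv : ∑ q, ‖v q‖ ^ 2 = 1)
    (ψ : Fin m × Fin n → ℂ) (hψP : P *ᵥ ψ = ψ) (hψ1 : ∑ p, ‖ψ p‖ ^ 2 = 1) :
    ‖star (fun p : Fin m × Fin n => u p.1 * star (v p.2)) ⬝ᵥ ψ‖ ^ 2 ≤ Λ := by
  rw [prod_dot' u v ψ (coefMat ψ) (fun p q => rfl)]
  have h1 := cs_sq' u (coefMat ψ *ᵥ v)
  rw [hu, one_mul] at h1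
  have h2 : ∑ p, ‖(coefMat ψ *ᵥ v) p‖ ^ 2
      = (star v ⬝ᵥ (((coefMat ψ)ᴴ * coefMat ψ) *ᵥ v)).re := by
    rw [← AtA_dot', dot_self_re']
  have h3 := quadform_le' (Matrix.isHermitian_conjTranspose_mul_self (coefMat ψ))
    (fun i => eig_le_top hn ψ i) v
  rw [hv, mul_one] at h3
  have h4 : topSchmidtSq ψ ≤ Λ := by
    rw [hΛ]
    exact le_csSup (bddS P) ⟨ψ, hψP, hψ1, rfl⟩
  calc ‖star u ⬝ᵥ (coefMat ψ *ᵥ v)‖ ^ 2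
      ≤ ∑ p, ‖(coefMat ψ *ᵥ v) p‖ ^ 2 := h1
    _ = (star v ⬝ᵥ (((coefMat ψ)ᴴ * coefMat ψ) *ᵥ v)).re := h2
    _ ≤ topSchmidtSq ψ := h3
    _ ≤ Λ := h4

private lemma overlap' (hn : 0 < n)
    (P : Matrix (Fin m × Fin n) (Fin m × Fin n) ℂ) (Λ : ℝ)
    (hΛ : Λ = sSup {x : ℝ | ∃ ψ : Fin m × Fin n → ℂ, P *ᵥ ψ = ψ ∧
      (∑ p, ‖ψ p‖ ^ 2 = 1) ∧ x = topSchmidtSq ψ})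
    (u : Fin m → ℂ) (hu : ∑ p, ‖u p‖ ^ 2 = 1)
    (v : Fin n → ℂ) (hv : ∑ q, ‖v q‖ ^ 2 = 1)
    (z : Fin m × Fin n → ℂ) (hz : P *ᵥ z = z) :
    ‖star (fun p : Fin m × Fin n => u p.1 * star (v p.2)) ⬝ᵥ z‖ ^ 2
      ≤ Λ * ∑ p, ‖z p‖ ^ 2 := by
  set S := ∑ p, ‖z p‖ ^ 2 with hS
  have hS0 : 0 ≤ S := Finset.sum_nonneg fun p _ => by positivity
  rcases eq_or_lt_of_le hS0 with hS0' | hSpos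
  · have hz0 : z = 0 := by
      funext p
      have h5 := (Finset.sum_eq_zero_iff_of_nonneg (fun p _ => by positivity)).mp hS0'.symm p
        (Finset.mem_univ p)
      have habs : ‖z p‖ = 0 := by
        nlinarith [norm_nonneg (z p)]
      simpa using habs
    rw [hz0]
    simp only [dotProduct_zero, map_zero, norm_zero]
    nlinarith [mul_nonneg (lam_nonneg P Λ hΛ) hS0]
  · set t := Real.sqrt S with ht
    have htpos : 0 < t := Real.sqrt_pos.mpr hSpos
    set ψ : Fin m × Fin n → ℂ := fun p => ((t : ℝ) : ℂ)⁻¹ * z p with hψ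
    have hψP : P *ᵥ ψ = ψ := by
      have hsm : ψ = ((t : ℝ) : ℂ)⁻¹ • z := rfl
      simp only [hsm, Matrix.mulVec_smul, hz]
    have hψ1 : ∑ p, ‖ψ p‖ ^ 2 = 1 := by
      have : ∀ p, ‖ψ p‖ ^ 2 = t⁻¹ ^ 2 * ‖z p‖ ^ 2 := by
        intro p
        rw [hψ]
        simp [_root_.map_mul, mul_pow, abs_of_nonneg (le_of_lt htpos), Complex.norm_real,
          abs_of_nonneg (inv_nonneg.mpr (le_of_lt htpos))]
      rw [Finset.sum_congr rfl fun p _ => this p, ← Finset.mul_sum, ← hS, ht, inv_pow,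
        Real.sq_sqrt hS0]
      field_simp
    have hov := overlap hn P Λ hΛ u hu v hv ψ hψP hψ1
    have hdot : star (fun p : Fin m × Fin n => u p.1 * star (v p.2)) ⬝ᵥ z
        = ((t : ℝ) : ℂ) * (star (fun p : Fin m × Fin n => u p.1 * star (v p.2)) ⬝ᵥ ψ) := by
      rw [hψ, dotProduct, dotProduct, Finset.mul_sum]
      refine Finset.sum_congr rfl fun p _ => ?_
      have htne : ((t : ℝ) : ℂ) ≠ 0 := by
        simp only [ne_eq, Complex.ofReal_eq_zero]
        exact ne_of_gt htpos
      field_simp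
    rw [hdot, norm_mul, mul_pow, Complex.norm_real, Real.norm_eq_abs, abs_of_nonneg (le_of_lt htpos),
      ht, Real.sq_sqrt hS0]
    rw [mul_comm]
    exact mul_le_mul_of_nonneg_right hov hS0
  
private lemma proj_bound (hn : 0 < n)
    (P : Matrix (Fin m × Fin n) (Fin m × Fin n) ℂ)
    (hP : P.IsHermitian) (hP2 : P * P = P) (Λ : ℝ)
    (hΛ : Λ = sSup {x : ℝ | ∃ ψ : Fin m × Fin n → ℂ, P *ᵥ ψ = ψ ∧
      (∑ p, ‖ψ p‖ ^ 2 = 1) ∧ x = topSchmidtSq ψ})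
    (u1 : Fin m → ℂ) (hu1 : ∑ p, ‖u1 p‖ ^ 2 = 1)
    (v1 : Fin n → ℂ) (hv1 : ∑ q, ‖v1 q‖ ^ 2 = 1)
    (u2 : Fin m → ℂ) (hu2 : ∑ p, ‖u2 p‖ ^ 2 = 1)
    (v2 : Fin n → ℂ) (hv2 : ∑ q, ‖v2 q‖ ^ 2 = 1) :
    ‖star (fun p : Fin m × Fin n => u1 p.1 * star (v1 p.2))
      ⬝ᵥ (P *ᵥ (fun p : Fin m × Fin n => u2 p.1 * star (v2 p.2)))‖ ≤ Λ := by
  set y : Fin m × Fin n → ℂ := fun p => u2 p.1 * star (v2 p.2) with hy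
  set z := P *ᵥ y with hzdef
  have hzfix : P *ᵥ z = z := by
    rw [hzdef, Matrix.mulVec_mulVec, hP2]
  have hΛ0 : 0 ≤ Λ := lam_nonneg P Λ hΛ
  set S := ∑ p, ‖z p‖ ^ 2 with hS
  have hS0 : 0 ≤ S := Finset.sum_nonneg fun p _ => by positivity
  -- S = (star y ⬝ᵥ z).re
  have hSy : S = (star y ⬝ᵥ z).re := by
    have h1 : star z ⬝ᵥ z = star y ⬝ᵥ ((Pᴴ * P) *ᵥ y) := AtA_dot' P y
    rw [hS, ← dot_self_re', h1, hP.eq, hP2, ← hzdef]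
  have hyb := overlap' hn P Λ hΛ u2 hu2 v2 hv2 z hzfix
  have hSle : S ≤ Λ := by
    have h2 : S ≤ ‖star y ⬝ᵥ z‖ := by
      rw [hSy]; exact Complex.re_le_norm _
    have h3 : S ^ 2 ≤ Λ * S := le_trans (by nlinarith) hyb
    rcases eq_or_lt_of_le hS0 with h4 | h4
    · linarith
    · nlinarith
  have hxb := overlap' hn P Λ hΛ u1 hu1 v1 hv1 z hzfix
  have h5 : ‖star (fun p : Fin m × Fin n => u1 p.1 * star (v1 p.2)) ⬝ᵥ z‖ ^ 2
      ≤ Λ * Λ := le_trans hxb (by nlinarith)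
  nlinarith [norm_nonneg (star (fun p : Fin m × Fin n => u1 p.1 * star (v1 p.2)) ⬝ᵥ z)]

private lemma key (hm : 0 < m) (hn : 0 < n)
    (P : Matrix (Fin m × Fin n) (Fin m × Fin n) ℂ)
    (hP : P.IsHermitian) (hP2 : P * P = P) (Λ : ℝ)
    (hΛ : Λ = sSup {x : ℝ | ∃ ψ : Fin m × Fin n → ℂ, P *ᵥ ψ = ψ ∧
      (∑ p, ‖ψ p‖ ^ 2 = 1) ∧ x = topSchmidtSq ψ})
    (Φ : Fin m × Fin n → ℂ) (hΦ1 : ∑ p, ‖Φ p‖ ^ 2 = 1) :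
    (star Φ ⬝ᵥ P *ᵥ Φ).re ≤ Λ * (1 + 2 * ∑ i : Fin n, ∑ j ∈ Finset.Ioi i,
      Real.sqrt (schmidtSq Φ i * schmidtSq Φ j)) := by
  obtain ⟨u, v, hu, hv, hdec⟩ := schmidt_decomp hm Φ
  set eig := (Matrix.isHermitian_conjTranspose_mul_self (coefMat Φ)).eigenvalues with heig
  set c : Fin n → ℝ := fun i => Real.sqrt (eig i) with hc
  set x : Fin n → (Fin m × Fin n → ℂ) := fun i p => u i p.1 * star (v i p.2) with hx
  have hc0 : ∀ i, 0 ≤ c i := fun i => Real.sqrt_nonneg _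
  have hΦp : ∀ p, Φ p = ∑ i, (c i : ℂ) * x i p := hdec
  have hPB : ∀ i j, ‖star (x i) ⬝ᵥ P *ᵥ x j‖ ≤ Λ := fun i j =>
    proj_bound hn P hP hP2 Λ hΛ (u i) (hu i) (v i) (hv i) (u j) (hu j) (v j) (hv j)
  have hPΦ : ∀ r, (P *ᵥ Φ) r = ∑ j, (c j : ℂ) * (P *ᵥ x j) r := by
    intro r
    simp only [mulVec, dotProduct]
    rw [Finset.sum_congr rfl fun s _ => by rw [hΦp s]]
    rw [Finset.sum_congr rfl fun s (_ : s ∈ Finset.univ) => Finset.mul_sum (Finset.univ) (fun j => (c j : ℂ) * x j s) (P r s)]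
    rw [Finset.sum_comm]
    refine Finset.sum_congr rfl fun j _ => ?_
    rw [Finset.mul_sum]
    exact Finset.sum_congr rfl fun s _ => by ring
  have hstar : ∀ p, (star Φ) p = ∑ i, (c i : ℂ) * star (x i p) := by
    intro p
    rw [Pi.star_apply, hΦp p, star_sum]
    refine Finset.sum_congr rfl fun i _ => ?_
    rw [star_mul']
    simp [Complex.star_def, Complex.conj_ofReal]
  have hterm : ∀ p, (star Φ) p * (P *ᵥ Φ) p
      = ∑ i, ∑ j, (c i : ℂ) * (c j : ℂ) * ((star (x i)) p * (P *ᵥ x j) p) := by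
    intro p
    rw [hstar p, hPΦ p, Finset.sum_mul]
    refine Finset.sum_congr rfl fun i _ => ?_
    rw [Finset.mul_sum]
    refine Finset.sum_congr rfl fun j _ => ?_
    simp only [Pi.star_apply]
    ring
  have hexp : star Φ ⬝ᵥ P *ᵥ Φ
      = ∑ i, ∑ j, (c i : ℂ) * (c j : ℂ) * (star (x i) ⬝ᵥ P *ᵥ x j) := by
    calc star Φ ⬝ᵥ P *ᵥ Φ
        = ∑ p, ∑ i, ∑ j, (c i : ℂ) * (c j : ℂ) * ((star (x i)) p * (P *ᵥ x j) p) := by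
          rw [dotProduct]
          exact Finset.sum_congr rfl fun p _ => hterm p
      _ = ∑ i, ∑ p, ∑ j, (c i : ℂ) * (c j : ℂ) * ((star (x i)) p * (P *ᵥ x j) p) :=
          Finset.sum_comm
      _ = ∑ i, ∑ j, ∑ p, (c i : ℂ) * (c j : ℂ) * ((star (x i)) p * (P *ᵥ x j) p) :=
          Finset.sum_congr rfl fun i _ => Finset.sum_comm
      _ = ∑ i, ∑ j, (c i : ℂ) * (c j : ℂ) * (star (x i) ⬝ᵥ P *ᵥ x j) := by
          refine Finset.sum_congr rfl fun i _ => Finset.sum_congr rfl fun j _ => ?_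
          rw [dotProduct, Finset.mul_sum]
  have habs : (star Φ ⬝ᵥ P *ᵥ Φ).re ≤ Λ * (∑ i, c i)^2 := by
    calc (star Φ ⬝ᵥ P *ᵥ Φ).re ≤ ‖star Φ ⬝ᵥ P *ᵥ Φ‖ := Complex.re_le_norm _
      _ ≤ ∑ i, ∑ j, ‖(c i : ℂ) * (c j : ℂ) * (star (x i) ⬝ᵥ P *ᵥ x j)‖ := by
          rw [hexp]
          exact le_trans (norm_sum_le _ _)
            (Finset.sum_le_sum fun i _ => norm_sum_le _ _)
      _ ≤ ∑ i, ∑ j, c i * c j * Λ := by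
          refine Finset.sum_le_sum fun i _ => Finset.sum_le_sum fun j _ => ?_
          rw [norm_mul, norm_mul, Complex.norm_real, Complex.norm_real, Real.norm_eq_abs, Real.norm_eq_abs,
            abs_of_nonneg (hc0 i), abs_of_nonneg (hc0 j)]
          rw [mul_assoc, mul_assoc]
          refine mul_le_mul_of_nonneg_left ?_ (hc0 i)
          exact mul_le_mul_of_nonneg_left (hPB i j) (hc0 j)
      _ = Λ * (∑ i, c i)^2 := by
          rw [sq, Finset.sum_mul_sum, Finset.mul_sum]
          refine Finset.sum_congr rfl fun i _ => ?_
          rw [Finset.mul_sum]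
          exact Finset.sum_congr rfl fun j _ => by ring
  have hsq : (∑ i, c i)^2 = 1 + 2 * ∑ i : Fin n, ∑ j ∈ Finset.Ioi i,
      Real.sqrt (schmidtSq Φ i * schmidtSq Φ j) := by
    have h1 : ∑ i, c i = ∑ i, Real.sqrt (schmidtSq Φ i) := (sum_schmidt_comp Φ Real.sqrt).symm
    rw [h1, sq_sum_eq']
    have h2 : ∑ i, Real.sqrt (schmidtSq Φ i)^2 = 1 := by
      rw [Finset.sum_congr rfl fun i (_ : i ∈ Finset.univ) => Real.sq_sqrt (schmidt_nonneg Φ i),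
        sum_schmidt Φ, hΦ1]
    rw [h2]
    have h3 : ∀ i j : Fin n, Real.sqrt (schmidtSq Φ i) * Real.sqrt (schmidtSq Φ j)
        = Real.sqrt (schmidtSq Φ i * schmidtSq Φ j) := fun i j =>
      (Real.sqrt_mul (schmidt_nonneg Φ i) _).symm
    rw [Finset.sum_congr rfl fun i _ => Finset.sum_congr rfl fun j _ => h3 i j]
  rw [← hsq]
  exact habs

end Aux

/-- Main bound: `Tr(ρ Π_V) ≤ Λ (1 + 2 ∑_μ q_μ ∑_{i<j} √(λ_i^{(μ)} λ_j^{(μ)}))`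
for any ensemble decomposition of `ρ`. -/
theorem stmt9 {m n N : ℕ} (hmn : m ≤ n)
    (ρ P : Matrix (Fin m × Fin n) (Fin m × Fin n) ℂ)
    (hP : P.IsHermitian) (hP2 : P * P = P)
    (q : Fin N → ℝ) (hq : ∀ μ, 0 ≤ q μ) (hq1 : ∑ μ, q μ = 1)
    (Φ : Fin N → (Fin m × Fin n → ℂ))
    (hΦ : ∀ μ, ∑ p, ‖Φ μ p‖ ^ 2 = 1)
    (hρ : ρ = ∑ μ, (q μ : ℂ) • Matrix.vecMulVec (Φ μ) (star (Φ μ)))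
    (Λ : ℝ)
    (hΛ : Λ = sSup {x : ℝ | ∃ ψ : Fin m × Fin n → ℂ, P *ᵥ ψ = ψ ∧
      (∑ p, ‖ψ p‖ ^ 2 = 1) ∧ x = topSchmidtSq ψ}) :
    ((ρ * P).trace).re ≤
      Λ * (1 + 2 * ∑ μ, q μ * ∑ i : Fin n, ∑ j ∈ Finset.Ioi i,
        Real.sqrt (schmidtSq (Φ μ) i * schmidtSq (Φ μ) j)) := by
  classical
  rcases Nat.eq_zero_or_pos N with hN | hN
  · subst hN
    simp at hq1
  have μ0 : Fin N := ⟨0, hN⟩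
  rcases Nat.eq_zero_or_pos m with hm | hm
  · subst hm
    have := hΦ μ0
    simp at this
  rcases Nat.eq_zero_or_pos n with hn | hn
  · subst hn
    have := hΦ μ0
    simp at this
  have htr : ((ρ * P).trace) = ∑ μ, (q μ : ℂ) * (star (Φ μ) ⬝ᵥ P *ᵥ Φ μ) := by
    rw [hρ, Finset.sum_mul, Matrix.trace_sum]
    refine Finset.sum_congr rfl fun μ _ => ?_
    rw [Matrix.smul_mul, Matrix.trace_smul, smul_eq_mul]
    congr 1
    simp only [Matrix.trace, Matrix.diag, Matrix.mul_apply, Matrix.vecMulVec_apply,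
      dotProduct, mulVec, Pi.star_apply]
    rw [Finset.sum_comm]
    refine Finset.sum_congr rfl fun r _ => ?_
    rw [Finset.mul_sum]
    exact Finset.sum_congr rfl fun p _ => by ring
  have hre : ((ρ * P).trace).re = ∑ μ, q μ * (star (Φ μ) ⬝ᵥ P *ᵥ Φ μ).re := by
    rw [htr, Complex.re_sum]
    refine Finset.sum_congr rfl fun μ _ => ?_
    rw [Complex.mul_re, Complex.ofReal_re, Complex.ofReal_im]
    ring
  rw [hre]
  calc ∑ μ, q μ * (star (Φ μ) ⬝ᵥ P *ᵥ Φ μ).re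
      ≤ ∑ μ, q μ * (Λ * (1 + 2 * ∑ i : Fin n, ∑ j ∈ Finset.Ioi i,
          Real.sqrt (schmidtSq (Φ μ) i * schmidtSq (Φ μ) j))) :=
        Finset.sum_le_sum fun μ _ => mul_le_mul_of_nonneg_left
          (key hm hn P hP hP2 Λ hΛ (Φ μ) (hΦ μ)) (hq μ)
    _ = Λ * (1 + 2 * ∑ μ, q μ * ∑ i : Fin n, ∑ j ∈ Finset.Ioi i,
          Real.sqrt (schmidtSq (Φ μ) i * schmidtSq (Φ μ) j)) := by
        rw [Finset.sum_congr rfl fun μ (_ : μ ∈ Finset.univ) =>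
          (by ring : q μ * (Λ * (1 + 2 * ∑ i : Fin n, ∑ j ∈ Finset.Ioi i,
            Real.sqrt (schmidtSq (Φ μ) i * schmidtSq (Φ μ) j)))
            = Λ * q μ + 2 * Λ * (q μ * ∑ i : Fin n, ∑ j ∈ Finset.Ioi i,
              Real.sqrt (schmidtSq (Φ μ) i * schmidtSq (Φ μ) j)))]
        rw [Finset.sum_add_distrib, ← Finset.mul_sum, ← Finset.mul_sum, hq1]
        ring
end

section
/- Let ρ be a separable density operator on ℂᵐ ⊗ ℂⁿ, and let Π_V be the orthogonal projection onto a subspace V. Then Tr(ρ Π_V) ≤ Λ, where Λ is the supremum over unit vectors Ψ ∈ V of the square of the largest Schmidt coefficient of Ψ. -/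
open Matrix

/-- A state on `ℂᵐ ⊗ ℂⁿ` is separable if it is a convex combination of
pure product states. -/
def IsSeparableState {m n : ℕ} (ρ : Matrix (Fin m × Fin n) (Fin m × Fin n) ℂ) : Prop :=
  ∃ (N : ℕ) (p : Fin N → ℝ) (a : Fin N → Fin m → ℂ) (b : Fin N → Fin n → ℂ),
    (∀ k, 0 ≤ p k) ∧ (∑ k, p k = 1) ∧
    (∀ k, ∑ i, ‖a k i‖ ^ 2 = 1) ∧
    (∀ k, ∑ j, ‖b k j‖ ^ 2 = 1) ∧
    ρ = ∑ k, (p k : ℂ) •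
      Matrix.vecMulVec (fun x => a k x.1 * b k x.2) (star fun x => a k x.1 * b k x.2)

/-!
For a product vector `v = a ⊗ b` and the unit vector `φ = Π_V v / ‖Π_V v‖ ∈ V` one has
`⟨v, Π_V v⟩ = |⟨v, φ⟩|²`. Writing `C` for the coefficient matrix of `φ`,
`⟨a ⊗ b, φ⟩ = a* C b̄`, so Cauchy–Schwarz and the Rayleigh bound for `C* C` give
`|⟨a ⊗ b, φ⟩|² ≤ ‖C b̄‖² ≤ λ_max(C* C)`, the top squared Schmidt coefficient of `φ`.
Hence `Tr(ρ Π_V) ≤ Λ` for pure product states, and by linearity for their mixtures.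
-/

section RCLike

variable {𝕜 ι : Type*} [RCLike 𝕜] [Fintype ι]

lemma star_dotProduct_self_eq_sum_norm_sq (w : ι → 𝕜) :
    star w ⬝ᵥ w = ((∑ i, ‖w i‖ ^ 2 : ℝ) : 𝕜) := by
  simp [dotProduct, RCLike.conj_mul]

lemma star_dotProduct_conjTranspose_mul_self_mulVec {κ : Type*} [Fintype κ]
    (B : Matrix κ ι 𝕜) (x : ι → 𝕜) :
    star x ⬝ᵥ (Bᴴ * B) *ᵥ x = ((∑ i, ‖(B *ᵥ x) i‖ ^ 2 : ℝ) : 𝕜) := by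
  rw [← mulVec_mulVec, dotProduct_mulVec, ← star_mulVec, star_dotProduct_self_eq_sum_norm_sq]

lemma norm_star_dotProduct_sq_le (a w : ι → 𝕜) :
    ‖star a ⬝ᵥ w‖ ^ 2 ≤ (∑ i, ‖a i‖ ^ 2) * ∑ i, ‖w i‖ ^ 2 := by
  have h := norm_inner_le_norm (𝕜 := 𝕜) (WithLp.toLp 2 a) (WithLp.toLp 2 w)
  rw [EuclideanSpace.inner_toLp_toLp, dotProduct_comm] at h
  have hnorm (v : ι → 𝕜) : ‖WithLp.toLp 2 v‖ ^ 2 = ∑ i, ‖v i‖ ^ 2 := EuclideanSpace.norm_sq_eq _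
  rw [← hnorm, ← hnorm, ← mul_pow]
  gcongr

lemma Matrix.sum_eigenvalues_conjTranspose_mul_self [DecidableEq ι] {κ : Type*} [Fintype κ]
    (B : Matrix κ ι 𝕜) :
    ∑ i, (isHermitian_conjTranspose_mul_self B).eigenvalues i = ∑ k, ∑ i, ‖B k i‖ ^ 2 := by
  have h := (isHermitian_conjTranspose_mul_self B).trace_eq_sum_eigenvalues
  simp only [trace, diag_apply, mul_apply, conjTranspose_apply, RCLike.star_def,
    RCLike.conj_mul] at h
  rw [Finset.sum_comm] at h
  exact_mod_cast h.symm

open MatrixOrder ComplexOrder in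
lemma Matrix.IsHermitian.re_star_dotProduct_mulVec_le [DecidableEq ι] {A : Matrix ι ι 𝕜}
    (hA : A.IsHermitian) (x : ι → 𝕜) :
    RCLike.re (star x ⬝ᵥ A *ᵥ x) ≤ (⨆ i, hA.eigenvalues i) * ∑ i, ‖x i‖ ^ 2 := by
  have hle : A ≤ algebraMap ℝ _ (⨆ i, hA.eigenvalues i) := by
    refine le_algebraMap_of_spectrum_le fun r hr => ?_
    obtain ⟨i, rfl⟩ := hA.spectrum_real_eq_range_eigenvalues ▸ hr
    exact le_ciSup (Set.finite_range _).bddAbove i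
  have h := RCLike.nonneg_iff.mp ((le_iff.mp hle).dotProduct_mulVec_nonneg x)
  rw [Algebra.algebraMap_eq_smul_one, sub_mulVec, smul_mulVec, one_mulVec, dotProduct_sub,
    dotProduct_smul, star_dotProduct_self_eq_sum_norm_sq, map_sub, sub_nonneg, RCLike.smul_re,
    RCLike.ofReal_re] at h
  exact h.1

/-- `⟨v, P v⟩ = |⟨v, φ⟩|²` for the unit vector `φ = P v / ‖P v‖` in the range of `P`. -/
lemma exists_mulVec_eq_self_re_star_dotProduct_eq {P : Matrix ι ι 𝕜} (hP : P.IsHermitian)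
    (hP2 : P * P = P) (v : ι → 𝕜) (hv : P *ᵥ v ≠ 0) :
    ∃ φ : ι → 𝕜, P *ᵥ φ = φ ∧ ∑ i, ‖φ i‖ ^ 2 = 1 ∧
      RCLike.re (star v ⬝ᵥ P *ᵥ v) = ‖star v ⬝ᵥ φ‖ ^ 2 := by
  set c := ∑ i, ‖(P *ᵥ v) i‖ ^ 2
  have hPv : star v ⬝ᵥ P *ᵥ v = (c : 𝕜) := by
    have h := star_dotProduct_conjTranspose_mul_self_mulVec P v
    rwa [hP.eq, hP2] at h
  have hc : 0 < c := by
    obtain ⟨i, hi⟩ := Function.ne_iff.mp hv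
    exact Finset.sum_pos' (fun i _ => by positivity)
      ⟨i, Finset.mem_univ i, pow_pos (norm_pos_iff.mpr hi) 2⟩
  have hsqrt : (√c)⁻¹ ^ 2 * c = 1 := by
    rw [inv_pow, Real.sq_sqrt hc.le, inv_mul_cancel₀ hc.ne']
  refine ⟨(((√c)⁻¹ : ℝ) : 𝕜) • P *ᵥ v, by rw [mulVec_smul, mulVec_mulVec, hP2], ?_, ?_⟩
  · simp only [Pi.smul_apply, smul_eq_mul, norm_mul, mul_pow, ← Finset.mul_sum,
      RCLike.norm_ofReal, sq_abs]
    exact hsqrt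
  · rw [dotProduct_smul, hPv, smul_eq_mul, ← RCLike.ofReal_mul, RCLike.norm_ofReal, sq_abs,
      RCLike.ofReal_re, mul_pow, pow_two c, ← mul_assoc, hsqrt, one_mul]

end RCLike

lemma iSup_descSort {n : ℕ} (f : Fin n → ℝ) : ⨆ i, descSort f i = ⨆ i, f i :=
  (Fin.revPerm.trans (Tuple.sort f)).iSup_comp

section Schmidt

variable {m n : ℕ}

lemma topSchmidtSq_eq_iSup_eigenvalues (ψ : Fin m × Fin n → ℂ) :
    topSchmidtSq ψ = ⨆ j, (isHermitian_conjTranspose_mul_self (coefMat ψ)).eigenvalues j :=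
  iSup_descSort _

lemma topSchmidtSq_nonneg (ψ : Fin m × Fin n → ℂ) : 0 ≤ topSchmidtSq ψ := by
  rw [topSchmidtSq_eq_iSup_eigenvalues]
  exact Real.iSup_nonneg (eigenvalues_conjTranspose_mul_self_nonneg _)

lemma topSchmidtSq_le_sum_norm_sq (ψ : Fin m × Fin n → ℂ) :
    topSchmidtSq ψ ≤ ∑ p, ‖ψ p‖ ^ 2 := by
  rw [topSchmidtSq_eq_iSup_eigenvalues]
  refine Real.iSup_le (fun j => ?_) (by positivity)
  calc _ ≤ ∑ i, (isHermitian_conjTranspose_mul_self (coefMat ψ)).eigenvalues i :=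
        Finset.single_le_sum (fun i _ => eigenvalues_conjTranspose_mul_self_nonneg _ i)
          (Finset.mem_univ j)
    _ = ∑ p, ‖ψ p‖ ^ 2 := by
        rw [sum_eigenvalues_conjTranspose_mul_self, Fintype.sum_prod_type]
        rfl

lemma norm_star_dotProduct_prod_sq_le (a : Fin m → ℂ) (b : Fin n → ℂ) (φ : Fin m × Fin n → ℂ) :
    ‖(star fun x : Fin m × Fin n => a x.1 * b x.2) ⬝ᵥ φ‖ ^ 2
      ≤ (∑ i, ‖a i‖ ^ 2) * (∑ j, ‖b j‖ ^ 2) * topSchmidtSq φ := by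
  have hsplit : (star fun x : Fin m × Fin n => a x.1 * b x.2) ⬝ᵥ φ
      = star a ⬝ᵥ coefMat φ *ᵥ star b := by
    simp only [dotProduct, mulVec, Pi.star_apply, star_mul', Fintype.sum_prod_type, coefMat,
      Finset.mul_sum, of_apply]
    exact Finset.sum_congr rfl fun i _ => Finset.sum_congr rfl fun j _ => by ring
  have hray := (isHermitian_conjTranspose_mul_self (coefMat φ)).re_star_dotProduct_mulVec_le
    (star b)
  rw [star_dotProduct_conjTranspose_mul_self_mulVec, RCLike.ofReal_re,
    ← topSchmidtSq_eq_iSup_eigenvalues] at hray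
  simp only [Pi.star_apply, norm_star] at hray
  calc _ = ‖star a ⬝ᵥ coefMat φ *ᵥ star b‖ ^ 2 := by rw [hsplit]
    _ ≤ (∑ i, ‖a i‖ ^ 2) * ∑ i, ‖(coefMat φ *ᵥ star b) i‖ ^ 2 := norm_star_dotProduct_sq_le _ _
    _ ≤ (∑ i, ‖a i‖ ^ 2) * (topSchmidtSq φ * ∑ j, ‖b j‖ ^ 2) := by gcongr
    _ = _ := by ring

/-- The quantity `Λ` of the theorem, for `V` the range of `P`. -/
noncomputable def supTopSchmidtSq (P : Matrix (Fin m × Fin n) (Fin m × Fin n) ℂ) : ℝ :=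
  sSup {x : ℝ | ∃ ψ : Fin m × Fin n → ℂ, P *ᵥ ψ = ψ ∧
    (∑ p, ‖ψ p‖ ^ 2 = 1) ∧ x = topSchmidtSq ψ}

variable {P : Matrix (Fin m × Fin n) (Fin m × Fin n) ℂ}

lemma supTopSchmidtSq_nonneg : 0 ≤ supTopSchmidtSq P :=
  Real.sSup_nonneg (by rintro _ ⟨ψ, -, -, rfl⟩; exact topSchmidtSq_nonneg ψ)

lemma topSchmidtSq_le_supTopSchmidtSq {ψ : Fin m × Fin n → ℂ} (hψ : P *ᵥ ψ = ψ)
    (hψ1 : ∑ p, ‖ψ p‖ ^ 2 = 1) : topSchmidtSq ψ ≤ supTopSchmidtSq P :=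
  le_csSup ⟨1, by rintro _ ⟨ψ, -, h, rfl⟩; exact h ▸ topSchmidtSq_le_sum_norm_sq ψ⟩
    ⟨ψ, hψ, hψ1, rfl⟩

lemma re_star_dotProduct_mulVec_prod_le_supTopSchmidtSq (hP : P.IsHermitian) (hP2 : P * P = P)
    {a : Fin m → ℂ} {b : Fin n → ℂ} (ha : ∑ i, ‖a i‖ ^ 2 = 1) (hb : ∑ j, ‖b j‖ ^ 2 = 1) :
    ((star fun x : Fin m × Fin n => a x.1 * b x.2) ⬝ᵥ
      P *ᵥ fun x : Fin m × Fin n => a x.1 * b x.2).re ≤ supTopSchmidtSq P := by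
  by_cases hv : (P *ᵥ fun x : Fin m × Fin n => a x.1 * b x.2) = 0
  · rw [hv, dotProduct_zero, Complex.zero_re]
    exact supTopSchmidtSq_nonneg
  obtain ⟨φ, hφ, hφ1, heq⟩ := exists_mulVec_eq_self_re_star_dotProduct_eq hP hP2 _ hv
  calc _ = _ := heq
    _ ≤ topSchmidtSq φ := by simpa [ha, hb] using norm_star_dotProduct_prod_sq_le a b φ
    _ ≤ supTopSchmidtSq P := topSchmidtSq_le_supTopSchmidtSq hφ hφ1

end Schmidt

lemma Matrix.trace_vecMulVec_mul {ι R : Type*} [Fintype ι] [CommSemiring R] (v w : ι → R)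
    (P : Matrix ι ι R) : (vecMulVec v w * P).trace = w ⬝ᵥ P *ᵥ v := by
  rw [trace_mul_comm, mul_vecMulVec, trace_vecMulVec, dotProduct_comm]

theorem stmt10_general {m n : ℕ}
    (ρ P : Matrix (Fin m × Fin n) (Fin m × Fin n) ℂ)
    (hρ : IsSeparableState ρ)
    (hP : P.IsHermitian) (hP2 : P * P = P)
    (Λ : ℝ)
    (hΛ : Λ = sSup {x : ℝ | ∃ ψ : Fin m × Fin n → ℂ, P *ᵥ ψ = ψ ∧
      (∑ p, ‖ψ p‖ ^ 2 = 1) ∧ x = topSchmidtSq ψ}) :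
    ((ρ * P).trace).re ≤ Λ := by
  obtain ⟨N, p, a, b, hp0, hp1, ha, hb, rfl⟩ := hρ
  change Λ = supTopSchmidtSq P at hΛ
  rw [Finset.sum_mul, trace_sum, Complex.re_sum, hΛ]
  calc _ = ∑ k, p k * ((star fun x : Fin m × Fin n => a k x.1 * b k x.2) ⬝ᵥ
        P *ᵥ fun x : Fin m × Fin n => a k x.1 * b k x.2).re := by
        simp only [smul_mul_assoc, trace_smul, trace_vecMulVec_mul, smul_eq_mul,
          Complex.re_ofReal_mul]
    _ ≤ ∑ k, p k * supTopSchmidtSq P := by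
        gcongr with k
        · exact hp0 k
        · exact re_star_dotProduct_mulVec_prod_le_supTopSchmidtSq hP hP2 (ha k) (hb k)
    _ = supTopSchmidtSq P := by rw [← Finset.sum_mul, hp1, one_mul]

/-- Separability criterion: a separable state satisfies `Tr(ρ Π_V) ≤ Λ`. -/
theorem stmt10 {m n : ℕ} (hmn : m ≤ n)
    (ρ P : Matrix (Fin m × Fin n) (Fin m × Fin n) ℂ)
    (hρ : IsSeparableState ρ)
    (hP : P.IsHermitian) (hP2 : P * P = P)
    (Λ : ℝ)
    (hΛ : Λ = sSup {x : ℝ | ∃ ψ : Fin m × Fin n → ℂ, P *ᵥ ψ = ψ ∧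
      (∑ p, ‖ψ p‖ ^ 2 = 1) ∧ x = topSchmidtSq ψ}) :
    ((ρ * P).trace).re ≤ Λ :=
  stmt10_general ρ P hρ hP hP2 Λ hΛ
end

section
/- Let A and B be n×n Hermitian matrices with eigenvalues λ_1(A) ≥ … ≥ λ_n(A) and λ_1(B) ≥ … ≥ λ_n(B). Then Σ_i λ_i(A)·λ_{n+1−i}(B) ≤ Tr(AB) ≤ Σ_i λ_i(A)·λ_i(B). -/
/-!
Write `A = U diag(λ) U*`, `B = V diag(μ) V*` and `W = U* V`. Then `Tr(AB) = ∑ᵢⱼ λᵢ μⱼ |Wᵢⱼ|²`,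
and since `W` is unitary the matrix `(|Wᵢⱼ|²)` is doubly stochastic. By Birkhoff's theorem the
doubly stochastic matrices are the convex hull of the permutation matrices, so the linear functional
`S ↦ λ ⬝ᵥ S μ` is bounded above and below by its values `∑ᵢ λᵢ μ_{σ i}` at permutation matrices,
and the rearrangement inequality bounds those by the similarly and oppositely sorted sums.
-/

open Matrix

section Rearrangement
variable {n : ℕ}

lemma antitone_descSort (f : Fin n → ℝ) : Antitone (descSort f) :=
  fun _ _ hij => Tuple.monotone_sort f (Fin.rev_le_rev.mpr hij)

lemma exists_perm_sum_mul_comp_perm_eq_sum_descSort (f g : Fin n → ℝ) (σ : Equiv.Perm (Fin n)) :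
    ∃ τ : Equiv.Perm (Fin n), ∑ i, f i * g (σ i) = ∑ i, descSort f i * descSort g (τ i) := by
  -- `descSort f = f ∘ (Fin.revPerm.trans (Tuple.sort f))`: reindex the sum along this permutation.
  refine ⟨(Fin.revPerm.trans (Tuple.sort f)).trans
    (σ.trans ((Tuple.sort g).symm.trans Fin.revPerm)), ?_⟩
  rw [← Equiv.sum_comp (Fin.revPerm.trans (Tuple.sort f)) fun i => f i * g (σ i)]
  simp only [Equiv.trans_apply, Fin.revPerm_apply, descSort, Fin.rev_rev, Equiv.apply_symm_apply]

lemma sum_descSort_mul_rev_le_sum_mul_comp_perm (f g : Fin n → ℝ) (σ : Equiv.Perm (Fin n)) :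
    ∑ i, descSort f i * descSort g i.rev ≤ ∑ i, f i * g (σ i) := by
  obtain ⟨τ, hτ⟩ := exists_perm_sum_mul_comp_perm_eq_sum_descSort f g σ
  have hanti : Antivary (descSort f) (descSort g ∘ Fin.rev) :=
    (antitone_descSort f).antivary ((antitone_descSort g).comp Fin.rev_anti)
  have hle := hanti.sum_mul_le_sum_mul_comp_perm (σ := τ.trans Fin.revPerm)
  simp only [Function.comp_apply, Equiv.trans_apply, Fin.revPerm_apply, Fin.rev_rev] at hle
  exact hτ ▸ hle

lemma sum_mul_comp_perm_le_sum_descSort_mul (f g : Fin n → ℝ) (σ : Equiv.Perm (Fin n)) :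
    ∑ i, f i * g (σ i) ≤ ∑ i, descSort f i * descSort g i := by
  obtain ⟨τ, hτ⟩ := exists_perm_sum_mul_comp_perm_eq_sum_descSort f g σ
  rw [hτ]
  exact ((antitone_descSort f).monovary (antitone_descSort g)).sum_mul_comp_perm_le_sum_mul

end Rearrangement

lemma exists_perm_le_dotProduct_mulVec_le {R : Type*} [Field R] [LinearOrder R]
    [IsStrictOrderedRing R] {n : Type*} [Fintype n] [DecidableEq n] (f g : n → R)
    {S : Matrix n n R} (hS : S ∈ doublyStochastic R n) :
    ∃ σ τ : Equiv.Perm n,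
      ∑ i, f i * g (σ i) ≤ f ⬝ᵥ S *ᵥ g ∧ f ⬝ᵥ S *ᵥ g ≤ ∑ i, f i * g (τ i) := by
  let φ : Matrix n n R →ₗ[R] R :=
    LinearMap.applyₗ g ∘ₗ LinearMap.applyₗ f ∘ₗ (toLinearMap₂' R).toLinearMap
  have hφ (M : Matrix n n R) : φ M = f ⬝ᵥ M *ᵥ g := toLinearMap₂'_apply' M f g
  have hperm (σ : Equiv.Perm n) : φ (σ.permMatrix R) = ∑ i, f i * g (σ i) := by
    rw [hφ, permMatrix_mulVec]; rfl
  rw [← SetLike.mem_coe, doublyStochastic_eq_convexHull_permMatrix] at hS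
  obtain ⟨_, ⟨σ, rfl⟩, hσ⟩ :=
    (φ.concaveOn convex_univ).exists_le_of_mem_convexHull (Set.subset_univ _) hS
  obtain ⟨_, ⟨τ, rfl⟩, hτ⟩ :=
    (φ.convexOn convex_univ).exists_ge_of_mem_convexHull (Set.subset_univ _) hS
  rw [hperm, hφ] at hσ hτ
  exact ⟨σ, τ, hσ, hτ⟩

namespace Matrix
variable {𝕜 : Type*} [RCLike 𝕜] {n : Type*} [Fintype n] [DecidableEq n]

lemma of_norm_sq_mem_doublyStochastic_of_mem_unitary {U : Matrix n n 𝕜}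
    (hU : U ∈ unitary (Matrix n n 𝕜)) :
    (of fun i j => ‖U i j‖ ^ 2) ∈ doublyStochastic ℝ n := by
  have row (i : n) : ∑ j, ‖U i j‖ ^ 2 = 1 := by
    have := congr($(Unitary.mul_star_self_of_mem hU) i i)
    simp only [mul_apply, star_apply, one_apply_eq, RCLike.star_def, RCLike.mul_conj] at this
    exact_mod_cast this
  have col (j : n) : ∑ i, ‖U i j‖ ^ 2 = 1 := by
    have := congr($(Unitary.star_mul_self_of_mem hU) j j)
    simp only [mul_apply, star_apply, one_apply_eq, RCLike.star_def, RCLike.conj_mul] at this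
    exact_mod_cast this
  exact mem_doublyStochastic_iff_sum.2 ⟨fun _ _ => sq_nonneg _, row, col⟩

lemma trace_diagonal_mul_mul_diagonal_mul_star (a b : n → ℝ) (W : Matrix n n 𝕜) :
    (diagonal (RCLike.ofReal ∘ a) * W * diagonal (RCLike.ofReal ∘ b) * star W).trace =
      ((a ⬝ᵥ (of fun i j => ‖W i j‖ ^ 2) *ᵥ b : ℝ) : 𝕜) := by
  simp only [trace, diag_apply, mul_apply (M := diagonal _ * W * diagonal _)]
  simp only [mul_diagonal, diagonal_mul, star_apply, dotProduct, mulVec, of_apply,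
    Function.comp_apply, Finset.mul_sum]
  push_cast
  refine Finset.sum_congr rfl fun i _ => Finset.sum_congr rfl fun j _ => ?_
  rw [RCLike.star_def, ← RCLike.mul_conj]
  ring

lemma IsHermitian.exists_mem_doublyStochastic_re_trace_mul_eq {A B : Matrix n n 𝕜}
    (hA : A.IsHermitian) (hB : B.IsHermitian) :
    ∃ S ∈ doublyStochastic ℝ n,
      RCLike.re (A * B).trace = hA.eigenvalues ⬝ᵥ S *ᵥ hB.eigenvalues := by
  set W := star hA.eigenvectorUnitary * hB.eigenvectorUnitary
  refine ⟨of fun i j => ‖(W : Matrix n n 𝕜) i j‖ ^ 2,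
    of_norm_sq_mem_doublyStochastic_of_mem_unitary W.2, ?_⟩
  rw [← RCLike.ofReal_re (K := 𝕜) (_ ⬝ᵥ _), ← trace_diagonal_mul_mul_diagonal_mul_star]
  conv_lhs => rw [hA.spectral_theorem, hB.spectral_theorem]
  simp only [W, Unitary.conjStarAlgAut_apply, Submonoid.coe_mul, Unitary.coe_star, star_mul,
    star_star, Matrix.mul_assoc]
  rw [trace_mul_comm]
  simp only [Matrix.mul_assoc]

end Matrix

/-- For Hermitian `A`, `B` with eigenvalues in non-increasing order,
`∑ λᵢ(A) λ_{n+1-i}(B) ≤ Tr(AB) ≤ ∑ λᵢ(A) λᵢ(B)`. -/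
theorem stmt14 {n : ℕ} (A B : Matrix (Fin n) (Fin n) ℂ)
    (hA : A.IsHermitian) (hB : B.IsHermitian) :
    (∑ i : Fin n, descSort hA.eigenvalues i * descSort hB.eigenvalues i.rev) ≤
        ((A * B).trace).re ∧
      ((A * B).trace).re ≤
        ∑ i : Fin n, descSort hA.eigenvalues i * descSort hB.eigenvalues i := by
  obtain ⟨S, hS, htrace⟩ := hA.exists_mem_doublyStochastic_re_trace_mul_eq hB
  obtain ⟨σ, τ, hσ, hτ⟩ := exists_perm_le_dotProduct_mulVec_le hA.eigenvalues hB.eigenvalues hS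
  rw [← RCLike.re_eq_complex_re, htrace]
  exact ⟨(sum_descSort_mul_rev_le_sum_mul_comp_perm _ _ σ).trans hσ,
    hτ.trans (sum_mul_comp_perm_le_sum_descSort_mul _ _ τ)⟩
end
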